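/- arXiv:1705.02172 — 6 statements merged into one kernel-verified Lean document; each statement's English description precedes it below -/
import Mathlib

section
/- Let h be a real number with 0 < h < π/2 and let v_1, v_2, v_3 be unit vectors in ℝ³. Suppose that the three congruent zones Z(v_1,h), Z(v_2,h), Z(v_3,h) cover the unit sphere S², i.e. S² = Z(v_1,h) ∪ Z(v_2,h) ∪ Z(v_3,h), and that every point of S² belongs to the interior of at most two of these zones. Then the three zones are pairwise orthogonal, i.e. ⟨v_i, v_j⟩ = 0 for all i ≠ j. -/
/-! The poles are linearly independent: a unit vector orthogonal to all of them would lie in the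
interior of every zone. Let `dᵢ` be the dual basis, `⟪dᵢ, vⱼ⟫ = δᵢⱼ`. For every choice of signs
`εᵢ = ±1` the unit vector `x` along `w = ∑ εᵢ dᵢ` has `|⟪x, vᵢ⟫| = ‖w‖⁻¹` for all `i`, so the
covering gives `‖w‖⁻¹ ≤ sin h` and the multiplicity bound gives `‖w‖⁻¹ ≥ sin h`. Hence `‖w‖` does
not depend on the signs, and comparing the four sign choices at two indices `i ≠ j` gives
`⟪dᵢ, dⱼ⟫ = 0`. Finally each `vᵢ` is a multiple of `dᵢ`. -/

open Metric Real Module Submodule Set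
open scoped RealInnerProductSpace

section

variable {E : Type*} [NormedAddCommGroup E] [InnerProductSpace ℝ E] {ι : Type*}

theorem inner_eq_zero_of_forall_norm_add_smul_add_smul_eq {r a b : E} {c : ℝ}
    (h : ∀ σ τ : ℝ, |σ| = 1 → |τ| = 1 → ‖r + σ • a + τ • b‖ = c) : ⟪a, b⟫ = 0 := by
  have hsq : ∀ σ τ : ℝ, ‖r + σ • a + τ • b‖ ^ 2 =
      ‖r‖ ^ 2 + σ ^ 2 * ‖a‖ ^ 2 + τ ^ 2 * ‖b‖ ^ 2 + 2 * σ * ⟪r, a⟫ + 2 * τ * ⟪r, b⟫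
        + 2 * (σ * τ) * ⟪a, b⟫ := fun σ τ => by
    simp only [← real_inner_self_eq_norm_sq, inner_add_left, inner_add_right,
      real_inner_smul_left, real_inner_smul_right, real_inner_comm r, real_inner_comm a b]
    ring
  have h1 : |(1 : ℝ)| = 1 := abs_one
  have hm : |(-1 : ℝ)| = 1 := by norm_num
  have := hsq 1 1; have := hsq 1 (-1); have := hsq (-1) 1; have := hsq (-1) (-1)
  simp only [h 1 1 h1 h1, h 1 (-1) h1 hm, h (-1) 1 hm h1, h (-1) (-1) hm hm] at *
  linarith

theorem exists_norm_eq_one_forall_inner_eq_zero_of_span_ne_top [FiniteDimensional ℝ E]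
    {v : ι → E} (hv : span ℝ (range v) ≠ ⊤) : ∃ x : E, ‖x‖ = 1 ∧ ∀ i, ⟪x, v i⟫ = 0 := by
  obtain ⟨y, hy, hy0⟩ := exists_mem_ne_zero_of_ne_bot (mt orthogonal_eq_bot_iff.1 hv)
  refine ⟨‖y‖⁻¹ • y, norm_smul_inv_norm (𝕜 := ℝ) hy0, fun i => ?_⟩
  rw [real_inner_smul_left, real_inner_comm,
    inner_right_of_mem_orthogonal (subset_span (mem_range_self i)) hy, mul_zero]

theorem norm_eq_inv_of_forall_abs_inner_eq_one [Nonempty ι] {v : ι → E} {s : ℝ}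
    (hcover : ∀ x : E, ‖x‖ = 1 → ∃ i, |⟪x, v i⟫| ≤ s)
    (hmult : ∀ x : E, ‖x‖ = 1 → ∃ i, s ≤ |⟪x, v i⟫|) {w : E} (hw : ∀ i, |⟪w, v i⟫| = 1) :
    ‖w‖ = s⁻¹ := by
  have hw0 : w ≠ 0 := by
    rintro rfl
    simpa using hw (Classical.arbitrary ι)
  have hx : ∀ i, |⟪‖w‖⁻¹ • w, v i⟫| = ‖w‖⁻¹ := fun i => by
    rw [real_inner_smul_left, abs_mul, hw i, mul_one, abs_inv, abs_norm]
  have hunit : ‖‖w‖⁻¹ • w‖ = 1 := norm_smul_inv_norm (𝕜 := ℝ) hw0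
  obtain ⟨i, hi⟩ := hcover _ hunit
  obtain ⟨j, hj⟩ := hmult _ hunit
  rw [hx] at hi hj
  rw [← le_antisymm hi hj, inv_inv]

end

namespace Module.Basis

variable {E : Type*} [NormedAddCommGroup E] [InnerProductSpace ℝ E] [FiniteDimensional ℝ E]
  {ι : Type*} (b : Basis ι ℝ E)

noncomputable def innerDual (i : ι) : E :=
  (InnerProductSpace.toDual ℝ E).symm (LinearMap.toContinuousLinearMap (b.coord i))

theorem inner_innerDual_left (i : ι) (x : E) : ⟪b.innerDual i, x⟫ = b.repr x i := by
  simp [innerDual, InnerProductSpace.toDual_symm_apply]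

theorem inner_innerDual_self (i : ι) : ⟪b.innerDual i, b i⟫ = 1 := by
  simp [inner_innerDual_left]

theorem inner_innerDual_of_ne {i j : ι} (h : i ≠ j) : ⟪b.innerDual i, b j⟫ = 0 := by
  simp [inner_innerDual_left, h.symm]

/-- The vector is `∑ εₗ dₗ` with `εᵢ = σ`, `εⱼ = τ` and all other `εₗ = 1`. -/
theorem abs_inner_innerDual_flip [Fintype ι] {i j : ι} (hij : i ≠ j) {σ τ : ℝ} (hσ : |σ| = 1)
    (hτ : |τ| = 1) (k : ι) :
    |⟪∑ l, b.innerDual l - b.innerDual i - b.innerDual j + σ • b.innerDual i + τ • b.innerDual j,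
      b k⟫| = 1 := by
  classical
  simp only [inner_add_left, inner_sub_left, sum_inner, real_inner_smul_left,
    inner_innerDual_left, repr_self, Finsupp.single_apply]
  by_cases hi : k = i
  · subst hi
    simp [hij, hσ]
  · by_cases hj : k = j
    · subst hj
      simp [Ne.symm hij, hτ]
    · simp [hi, hj]

theorem pairwise_inner_eq_zero_of_pairwise_inner_innerDual [Fintype ι]
    (h : Pairwise fun i j => ⟪b.innerDual i, b.innerDual j⟫ = 0) :
    Pairwise fun i j => ⟪b i, b j⟫ = 0 := by
  have hdual : ∀ i, b.innerDual i = ‖b.innerDual i‖ ^ 2 • b i := fun i => by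
    conv_lhs => rw [← b.sum_repr (b.innerDual i)]
    rw [Finset.sum_eq_single i (fun k _ hk => by rw [← inner_innerDual_left, h hk, zero_smul])
      (by simp), ← inner_innerDual_left, real_inner_self_eq_norm_sq]
  intro i j hij
  have hne : ‖b.innerDual i‖ ^ 2 ≠ 0 := by
    have := b.inner_innerDual_self i
    rw [hdual i, real_inner_smul_left] at this
    exact left_ne_zero_of_mul_eq_one this
  have := b.inner_innerDual_of_ne hij
  rw [hdual i, real_inner_smul_left] at this
  exact (mul_eq_zero.1 this).resolve_left hne

end Module.Basis

theorem pairwise_inner_eq_zero_of_cover_of_forall_exists_le_abs_inner {E : Type*}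
    [NormedAddCommGroup E] [InnerProductSpace ℝ E] [FiniteDimensional ℝ E] {ι : Type*}
    [Fintype ι] [Nonempty ι] (hcard : Fintype.card ι = finrank ℝ E) {v : ι → E} {s : ℝ}
    (hs : 0 < s) (hcover : ∀ x : E, ‖x‖ = 1 → ∃ i, |⟪x, v i⟫| ≤ s)
    (hmult : ∀ x : E, ‖x‖ = 1 → ∃ i, s ≤ |⟪x, v i⟫|) :
    Pairwise fun i j => ⟪v i, v j⟫ = 0 := by
  have hspan : ⊤ ≤ span ℝ (range v) := by
    rw [top_le_iff]
    by_contra hne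
    obtain ⟨x, hx, hxv⟩ := exists_norm_eq_one_forall_inner_eq_zero_of_span_ne_top hne
    obtain ⟨i, hi⟩ := hmult x hx
    rw [hxv i, abs_zero] at hi
    exact hs.not_ge hi
  obtain ⟨b, rfl⟩ : ∃ b : Basis ι ℝ E, ⇑b = v :=
    ⟨.mk (linearIndependent_of_top_le_span_of_card_eq_finrank hspan hcard) hspan, Basis.coe_mk _ _⟩
  refine b.pairwise_inner_eq_zero_of_pairwise_inner_innerDual fun i j hij => ?_
  exact inner_eq_zero_of_forall_norm_add_smul_add_smul_eq fun σ τ hσ hτ =>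
    norm_eq_inv_of_forall_abs_inner_eq_one hcover hmult (b.abs_inner_innerDual_flip hij hσ hτ)

theorem three_zones_cover_S2_pairwise_orthogonal_general (h : ℝ) (hh0 : 0 < h) (hhπ : h < π / 2)
    (v : Fin 3 → EuclideanSpace ℝ (Fin 3))
    (hcover : sphere (0 : EuclideanSpace ℝ (Fin 3)) 1 =
      ⋃ i, {x ∈ sphere (0 : EuclideanSpace ℝ (Fin 3)) 1 |
        |(inner ℝ x (v i) : ℝ)| ≤ Real.sin h})
    (hmult : ∀ x ∈ sphere (0 : EuclideanSpace ℝ (Fin 3)) 1,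
      {i : Fin 3 | |(inner ℝ x (v i) : ℝ)| < Real.sin h}.ncard ≤ 2) :
    ∀ i j, i ≠ j → (inner ℝ (v i) (v j) : ℝ) = 0 := by
  have hs : 0 < sin h := sin_pos_of_pos_of_lt_pi hh0 (by linarith [pi_pos])
  have hcover' : ∀ x, ‖x‖ = 1 → ∃ i, |⟪x, v i⟫| ≤ sin h := fun x hx => by
    have hx' : x ∈ sphere (0 : EuclideanSpace ℝ (Fin 3)) 1 := mem_sphere_zero_iff_norm.2 hx
    rw [hcover] at hx'
    obtain ⟨i, hi⟩ := mem_iUnion.1 hx'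
    exact ⟨i, hi.2⟩
  have hmult' : ∀ x, ‖x‖ = 1 → ∃ i, sin h ≤ |⟪x, v i⟫| := fun x hx => by
    by_contra! hlt
    simpa [hlt] using hmult x (mem_sphere_zero_iff_norm.2 hx)
  exact fun i j hij => pairwise_inner_eq_zero_of_cover_of_forall_exists_le_abs_inner (by simp) hs
    hcover' hmult' hij

/-- If three congruent zones of half-width `h` cover `S²` and every point
of `S²` lies in the interior of at most two of them, then the zones are pairwise orthogonal. -/
theorem three_zones_cover_S2_pairwise_orthogonal (h : ℝ) (hh0 : 0 < h) (hhπ : h < π / 2)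
    (v : Fin 3 → EuclideanSpace ℝ (Fin 3)) (hv : ∀ i, ‖v i‖ = 1)
    (hcover : sphere (0 : EuclideanSpace ℝ (Fin 3)) 1 =
      ⋃ i, {x ∈ sphere (0 : EuclideanSpace ℝ (Fin 3)) 1 |
        |(inner ℝ x (v i) : ℝ)| ≤ Real.sin h})
    (hmult : ∀ x ∈ sphere (0 : EuclideanSpace ℝ (Fin 3)) 1,
      {i : Fin 3 | |(inner ℝ x (v i) : ℝ)| < Real.sin h}.ncard ≤ 2) :
    ∀ i j, i ≠ j → (inner ℝ (v i) (v j) : ℝ) = 0 :=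
  three_zones_cover_S2_pairwise_orthogonal_general h hh0 hhπ v hcover hmult
end

section
/- Let d ≥ 3 be an integer and let δ > d − 1 be a real number. Then for all sufficiently large n the following holds: m_d·n^{-(1+δ)} < π/2 and there exist unit vectors v_1, …, v_n ∈ ℝ^d such that every point of S^{d-1} belongs to at most d of the zones Z(v_1, m_d·n^{-(1+δ)}), …, Z(v_n, m_d·n^{-(1+δ)}). -/
/-!
Let `n < p ≤ 2n` be prime and take the directions of the integer vectors
`w_i = (p, i mod p, i² mod p, …, i^(d-1) mod p)`, `0 ≤ i < n`, whose entries are at most `p`.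
Any `d` of them form a matrix whose determinant is `p` times a Vandermonde determinant that is
nonzero mod `p`, so it is at least `p` in absolute value. If a unit vector `x` lay in `d` of the
zones of half-width `h`, Cramer's rule applied to `x` (one of whose coordinates is at least `1/√d`)
would bound that determinant by `d · d! · p^d · sin h`, and
`sin h ≤ m_d n^{-(1+δ)} ≤ m_d n^{-d}` makes this smaller than `p` for large `n`.
So every point lies in fewer than `d` zones.
-/

open Metric Real

/-- `m_d = √(2πd) + 1`. -/
noncomputable def mConst (d : ℕ) : ℝ := Real.sqrt (2 * π * d) + 1

open Matrix

theorem EuclideanSpace.exists_norm_le_sqrt_card_mul_abs {ι : Type*} [Fintype ι] [Nonempty ι]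
    (x : EuclideanSpace ℝ ι) : ∃ k, ‖x‖ ≤ √(Fintype.card ι) * |x k| := by
  obtain ⟨k, hk⟩ := Finite.exists_max fun i => |x i|
  refine ⟨k, ?_⟩
  rw [EuclideanSpace.norm_eq, ← Real.sqrt_sq (abs_nonneg (x k)), ← Real.sqrt_mul (by positivity)]
  gcongr
  calc ∑ i, ‖x i‖ ^ 2 ≤ ∑ _i : ι, |x k| ^ 2 := by
        gcongr with i; rw [Real.norm_eq_abs]; exact hk i
    _ = _ := by simp

namespace Matrix

variable {n : Type*} [Fintype n] [DecidableEq n]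

theorem abs_det_le_factorial_mul_prod {R : Type*} [CommRing R] [LinearOrder R]
    [IsStrictOrderedRing R] (A : Matrix n n R) (C : n → R) (hA : ∀ i j, |A i j| ≤ C j) :
    |A.det| ≤ (Fintype.card n).factorial * ∏ j, C j := by
  calc |A.det| = |∑ σ : Equiv.Perm n, Equiv.Perm.sign σ • ∏ j, A (σ j) j| := by
        rw [det_apply]
    _ ≤ ∑ σ : Equiv.Perm n, ∏ j, |A (σ j) j| := by
      refine (Finset.abs_sum_le_sum_abs _ _).trans_eq (Finset.sum_congr rfl fun σ _ => ?_)
      rcases Int.units_eq_one_or (Equiv.Perm.sign σ) with h | h <;> simp [h, Finset.abs_prod]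
    _ ≤ ∑ _σ : Equiv.Perm n, ∏ j, C j := by gcongr with σ _ j; exact hA _ _
    _ = (Fintype.card n).factorial * ∏ j, C j := by simp [Fintype.card_perm]

theorem det_smul_eq_cramer_mulVec {R : Type*} [CommRing R] (A : Matrix n n R) (x : n → R) :
    A.det • x = cramer A (A *ᵥ x) := by
  rw [cramer_eq_adjugate_mulVec, mulVec_mulVec, adjugate_mul, smul_mulVec, one_mulVec]

theorem abs_det_mul_abs_le (A : Matrix n n ℝ) (x : n → ℝ) {P ε : ℝ} (hA : ∀ i j, |A i j| ≤ P)
    (hAx : ∀ i, |(A *ᵥ x) i| ≤ ε) (k : n) :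
    |A.det| * |x k| ≤ (Fintype.card n).factorial * (P ^ (Fintype.card n - 1) * ε) := by
  have hcol : ∀ i j, |A.updateCol k (A *ᵥ x) i j| ≤ Function.update (fun _ => P) k ε j := by
    intro i j
    rcases eq_or_ne j k with rfl | hj
    · simpa using hAx i
    · simpa [hj] using hA i j
  calc |A.det| * |x k| = |cramer A (A *ᵥ x) k| := by
        rw [← abs_mul, ← det_smul_eq_cramer_mulVec, Pi.smul_apply, smul_eq_mul]
    _ ≤ _ := by
      rw [cramer_apply]
      refine (abs_det_le_factorial_mul_prod _ _ hcol).trans_eq ?_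
      rw [Finset.prod_update_of_mem (Finset.mem_univ k), Finset.prod_const, mul_comm ε,
        Finset.card_sdiff, Finset.card_univ]
      simp

theorem abs_det_le_of_abs_mulVec_le [Nonempty n] (A : Matrix n n ℝ) {P ε : ℝ}
    (hA : ∀ i j, |A i j| ≤ P) {x : EuclideanSpace ℝ n} (hx : ‖x‖ = 1)
    (hAx : ∀ i, |(A *ᵥ x.ofLp) i| ≤ ε) :
    |A.det| ≤
      √(Fintype.card n) * ((Fintype.card n).factorial * (P ^ (Fintype.card n - 1) * ε)) := by
  obtain ⟨k, hk⟩ := x.exists_norm_le_sqrt_card_mul_abs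
  rw [hx] at hk
  calc |A.det| ≤ |A.det| * (√(Fintype.card n) * |x k|) :=
        le_mul_of_one_le_right (abs_nonneg _) hk
    _ = √(Fintype.card n) * (|A.det| * |x k|) := by ring
    _ ≤ _ := mul_le_mul_of_nonneg_left (A.abs_det_mul_abs_le _ hA hAx k) (by positivity)

end Matrix

def scaledMomentMatrix {ι : Type*} (d p : ℕ) [NeZero d] (t : ι → ℕ) : Matrix ι (Fin d) ℤ :=
  of fun j k => if k = 0 then p else (t j ^ (k : ℕ) % p : ℕ)

theorem abs_scaledMomentMatrix_le {ι : Type*} {d p : ℕ} [NeZero d] (hp : 0 < p) (t : ι → ℕ)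
    (j : ι) (k : Fin d) : |scaledMomentMatrix d p t j k| ≤ p := by
  rw [scaledMomentMatrix, of_apply]
  split_ifs
  · simp
  · rw [Nat.abs_cast, Nat.cast_le]
    exact (Nat.mod_lt _ hp).le

theorem le_abs_det_scaledMomentMatrix {d p : ℕ} [NeZero d] (hp : p.Prime) {t : Fin d → ℕ}
    (ht : ∀ j, t j < p) (hinj : Function.Injective t) :
    (p : ℤ) ≤ |(scaledMomentMatrix d p t).det| := by
  have : Fact p.Prime := ⟨hp⟩
  set V : Matrix (Fin d) (Fin d) ℤ := of fun j k => (t j ^ (k : ℕ) % p : ℕ)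
  have hV0 : ∀ j, V j 0 = 1 := fun j => by
    simp only [V, of_apply, Fin.val_zero, pow_zero, Nat.one_mod_eq_one.mpr hp.ne_one,
      Nat.cast_one]
  have hM : scaledMomentMatrix d p t = V.updateCol 0 ((p : ℤ) • fun j => V j 0) := by
    ext j k
    rcases eq_or_ne k 0 with rfl | hk
    · simp [scaledMomentMatrix, hV0]
    · simp [scaledMomentMatrix, V, hk]
  have hVp : V.map (Int.cast : ℤ → ZMod p) = vandermonde fun j => (t j : ZMod p) := by
    ext j k
    simp [V, vandermonde]
  have hV : V.det ≠ 0 := by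
    intro h
    have := congrArg (Int.cast : ℤ → ZMod p) h
    rw [Int.cast_det, hVp] at this
    refine det_vandermonde_ne_zero_iff.mpr ?_ (by simpa using this)
    intro a b hab
    apply hinj
    simpa [ZMod.natCast_eq_natCast_iff', Nat.mod_eq_of_lt (ht _)] using hab
  rw [hM, det_updateCol_smul, updateCol_eq_self, abs_mul, Nat.abs_cast]
  exact le_mul_of_one_le_right (by positivity) (Int.one_le_abs hV)

noncomputable def momentVector (d p : ℕ) [NeZero d] (i : ℕ) : EuclideanSpace ℝ (Fin d) :=
  WithLp.toLp 2 fun k => (scaledMomentMatrix d p id i k : ℝ)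

noncomputable def momentDirection (d p : ℕ) [NeZero d] (i : ℕ) : EuclideanSpace ℝ (Fin d) :=
  ‖momentVector d p i‖⁻¹ • momentVector d p i

section Moment

variable {d p : ℕ} [NeZero d]

theorem abs_momentVector_apply_le (hp : 0 < p) (i : ℕ) (k : Fin d) :
    |momentVector d p i k| ≤ p := by
  simpa [momentVector, ← Int.cast_abs] using
    (Int.cast_le (R := ℝ)).mpr (abs_scaledMomentMatrix_le hp id i k)

theorem momentVector_ne_zero (hp : 0 < p) (i : ℕ) : momentVector d p i ≠ 0 := by
  intro h
  have := congrArg (fun w : EuclideanSpace ℝ (Fin d) => w 0) h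
  simp [momentVector, scaledMomentMatrix, hp.ne'] at this

theorem norm_momentDirection (hp : 0 < p) (i : ℕ) : ‖momentDirection d p i‖ = 1 := by
  rw [momentDirection, norm_smul, norm_inv, norm_norm,
    inv_mul_cancel₀ (norm_ne_zero_iff.mpr (momentVector_ne_zero hp i))]

theorem norm_momentVector_le (hp : 0 < p) (i : ℕ) : ‖momentVector d p i‖ ≤ √d * p := by
  obtain ⟨k, hk⟩ := (momentVector d p i).exists_norm_le_sqrt_card_mul_abs
  refine hk.trans ?_
  rw [Fintype.card_fin]
  gcongr
  exact abs_momentVector_apply_le hp i k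

theorem ncard_abs_inner_momentDirection_le_lt {n : ℕ} (hp : p.Prime) (hnp : n ≤ p)
    {x : EuclideanSpace ℝ (Fin d)} (hx : ‖x‖ = 1) {s : ℝ}
    (hs : d * d.factorial * p ^ (d - 1) * s < 1) :
    {i : Fin n | |inner ℝ x (momentDirection d p i)| ≤ s}.ncard < d := by
  classical
  by_contra! hcard
  set S := {i : Fin n | |inner ℝ x (momentDirection d p i)| ≤ s}
  obtain ⟨σ⟩ : Nonempty (Fin d ↪ S) := Function.Embedding.nonempty_of_card_le <| by
    rwa [Fintype.card_fin, ← Set.toFinset_card, ← Set.ncard_eq_toFinset_card']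
  let t : Fin d → ℕ := fun j => (σ j : Fin n)
  let A : Matrix (Fin d) (Fin d) ℝ := (scaledMomentMatrix d p t).map (Int.cast : ℤ → ℝ)
  have hp0 : (0 : ℝ) < p := by exact_mod_cast hp.pos
  have hdet : (p : ℝ) ≤ |A.det| := by
    rw [← Int.cast_det, ← Int.cast_abs]
    exact_mod_cast le_abs_det_scaledMomentMatrix hp (fun j => (σ j : Fin n).2.trans_le hnp)
      fun a b h => σ.injective (Subtype.ext (Fin.ext h))
  have hA : ∀ j k, |A j k| ≤ p := fun j k => abs_momentVector_apply_le hp.pos (t j) k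
  have hAx : ∀ j, |(A *ᵥ x.ofLp) j| ≤ √d * p * s := fun j => by
    have hrow : (A *ᵥ x.ofLp) j =
        ‖momentVector d p (t j)‖ * inner ℝ x (momentDirection d p (t j)) := by
      rw [momentDirection, inner_smul_right,
        mul_inv_cancel_left₀ (norm_ne_zero_iff.mpr (momentVector_ne_zero hp.pos _))]
      simp [A, EuclideanSpace.inner_eq_star_dotProduct, mulVec, momentVector, dotProduct_comm]
      rfl
    rw [hrow, abs_mul, abs_norm]
    gcongr
    · exact norm_momentVector_le hp.pos _
    · exact (σ j).2
  have hsq : √(d : ℝ) * √d = d := Real.mul_self_sqrt (Nat.cast_nonneg _)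
  have key : (p : ℝ) ≤ d * d.factorial * p ^ (d - 1) * s * p := by
    refine ((A.abs_det_le_of_abs_mulVec_le hA hx hAx).trans' hdet).trans_eq ?_
    rw [Fintype.card_fin]
    linear_combination (d.factorial * p ^ (d - 1) * p * s : ℝ) * hsq
  linarith [mul_lt_mul_of_pos_right hs hp0]

end Moment

theorem one_le_mConst (d : ℕ) : 1 ≤ mConst d :=
  le_add_of_nonneg_left (Real.sqrt_nonneg _)

theorem mConst_pos (d : ℕ) : 0 < mConst d :=
  one_pos.trans_le (one_le_mConst d)

theorem mConst_mul_rpow_le_div_pow {d : ℕ} {x δ : ℝ} (hx : 1 ≤ x) (hδ : (d : ℝ) - 1 ≤ δ) :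
    mConst d * x ^ (-(1 + δ)) ≤ mConst d / x ^ d := by
  rw [div_eq_mul_inv, ← Real.rpow_natCast, ← Real.rpow_neg (by linarith)]
  exact mul_le_mul_of_nonneg_left (Real.rpow_le_rpow_of_exponent_le hx (by linarith))
    (mConst_pos d).le

theorem mConst_mul_rpow_lt_one {d n : ℕ} (hd : d ≠ 0) {δ : ℝ} (hδ : (d : ℝ) - 1 ≤ δ)
    (hn : mConst d < n) : mConst d * (n : ℝ) ^ (-(1 + δ)) < 1 := by
  have hn1 : (1 : ℝ) ≤ n := (one_le_mConst d).trans hn.le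
  calc mConst d * (n : ℝ) ^ (-(1 + δ)) ≤ mConst d / n ^ d := mConst_mul_rpow_le_div_pow hn1 hδ
    _ ≤ mConst d / n :=
      div_le_div_of_nonneg_left (mConst_pos d).le (by positivity) (le_self_pow₀ hn1 hd)
    _ < 1 := by rwa [div_lt_one (by linarith)]

theorem mul_sin_mConst_mul_rpow_lt_one {d n p : ℕ} (hd : d ≠ 0) {δ : ℝ}
    (hδ : (d : ℝ) - 1 ≤ δ) (hn : ((d * d.factorial * 2 ^ (d - 1) : ℕ) : ℝ) * mConst d < n)
    (hp : p ≤ 2 * n) :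
    d * d.factorial * p ^ (d - 1) * Real.sin (mConst d * (n : ℝ) ^ (-(1 + δ))) < 1 := by
  have hn0 : (0 : ℝ) < n := (mul_nonneg (Nat.cast_nonneg _) (mConst_pos d).le).trans_lt hn
  have hn1 : (1 : ℝ) ≤ n := by exact_mod_cast (show 0 < n by exact_mod_cast hn0)
  have hw : 0 ≤ mConst d * (n : ℝ) ^ (-(1 + δ)) := by
    have := mConst_pos d
    positivity
  have hnd : (n : ℝ) ^ d = n ^ (d - 1) * n := by rw [← pow_succ, Nat.sub_add_cancel (by omega)]
  calc d * d.factorial * p ^ (d - 1) * Real.sin (mConst d * (n : ℝ) ^ (-(1 + δ)))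
      ≤ d * d.factorial * p ^ (d - 1) * (mConst d * (n : ℝ) ^ (-(1 + δ))) := by
        gcongr; exact Real.sin_le hw
    _ ≤ d * d.factorial * (2 * n) ^ (d - 1) * (mConst d / n ^ d) := by
        gcongr
        · exact_mod_cast hp
        · exact mConst_mul_rpow_le_div_pow hn1 hδ
    _ = ((d * d.factorial * 2 ^ (d - 1) : ℕ) : ℝ) * mConst d / n := by
        rw [hnd, mul_pow]; push_cast; field_simp
    _ < 1 := by rwa [div_lt_one hn0]

/-- (Corollary 1 i), second part). For `d ≥ 3` and `δ > d - 1`, for all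
sufficiently large `n` there are `n` zones of half-width `m_d n^{-(1+δ)}` on `S^{d-1}`
with multiplicity at most `d`. -/
theorem zones_multiplicity_d (d : ℕ) (hd : 3 ≤ d) (δ : ℝ) (hδ : (d : ℝ) - 1 < δ) :
    ∃ N : ℕ, ∀ n : ℕ, N ≤ n →
      mConst d * (n : ℝ) ^ (-(1 + δ)) < π / 2 ∧
      ∃ v : Fin n → EuclideanSpace ℝ (Fin d), (∀ i, ‖v i‖ = 1) ∧
        ∀ x ∈ sphere (0 : EuclideanSpace ℝ (Fin d)) 1,
          {i : Fin n | |(inner ℝ x (v i) : ℝ)| ≤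
            Real.sin (mConst d * (n : ℝ) ^ (-(1 + δ)))}.ncard ≤ d := by
  have hd0 : d ≠ 0 := by omega
  have : NeZero d := ⟨hd0⟩
  set C : ℕ := d * d.factorial * 2 ^ (d - 1)
  have hC : 1 ≤ C := Nat.mul_pos (Nat.mul_pos (by omega) d.factorial_pos) (by positivity)
  refine ⟨⌈C * mConst d⌉₊ + 1, fun n hn => ?_⟩
  have hCn : C * mConst d < n := Nat.lt_of_ceil_lt hn
  have hmn : mConst d < n :=
    (le_mul_of_one_le_left (mConst_pos d).le (by exact_mod_cast hC)).trans_lt hCn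
  obtain ⟨p, hp, hnp, hp2n⟩ :=
    Nat.exists_prime_lt_and_le_two_mul n (Nat.cast_pos.mp ((mConst_pos d).trans hmn)).ne'
  refine ⟨(mConst_mul_rpow_lt_one hd0 hδ.le hmn).trans (by linarith [Real.pi_gt_three]),
    fun i => momentDirection d p i, fun i => norm_momentDirection hp.pos i, fun x hx => ?_⟩
  exact (ncard_abs_inner_momentDirection_le_lt hp hnp.le (by simpa using hx)
    (mul_sin_mConst_mul_rpow_lt_one hd0 hδ.le hCn hp2n)).le
end

section
/- Let d ≥ 3 be an integer and let 0 < ε < 1. Then there exists ω₀ with 0 < ω₀ ≤ π/2 (depending on ε and d) with the following property: for every ω with 0 < ω < ω₀ and every finite set {P_1, …, P_m} ⊆ S^{d-1} that is saturated for ω — i.e. arccos⟨P_i, P_j⟩ ≥ ω for all i ≠ j, and there is no point Q ∈ S^{d-1} with arccos⟨Q, P_i⟩ ≥ ω for all i — one has (1/(1+ε)) · (d·κ_d/κ_{d-1}) · ω^{-(d-1)} ≤ m ≤ (1+ε) · 8^{(d-1)/2} · (d·κ_d/κ_{d-1}) · ω^{-(d-1)}. -/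
/-!
Around each point `P` of a saturated set put the sector of the unit ball lying over the open
cap of angular radius `θ` about `P`. Saturation makes the sectors with `θ = ω` cover the
punctured ball; separation makes those with `θ = ω / 2` pairwise disjoint. In coordinates
`(t, y) ∈ ℝ × ℝ^{d-1}` with `t` along `P`, a sector lies between the cones
`{0 < t ≤ cos θ, ‖y‖ < t tan θ}` and `{0 < t ≤ 1, ‖y‖ < t tan θ}`, of volumes
`sin^{d-1} θ cos θ κ_{d-1} / d` and `tan^{d-1} θ κ_{d-1} / d`. Comparing the total volume with
`κ_d` and using `tan θ ~ θ ~ sin θ` as `θ → 0` gives both bounds; halving the angle costs the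
factor `2^{d-1} ≤ 8^{(d-1)/2}`.
-/

open Metric Real MeasureTheory

/-- `κ_d`, the Lebesgue measure of the unit ball of `ℝ^d`. -/
noncomputable def unitBallVolume (d : ℕ) : ℝ :=
  (volume (Metric.ball (0 : EuclideanSpace ℝ (Fin d)) 1)).toReal

open Module InnerProductGeometry

open scoped RealInnerProductSpace

section Cone

variable {F : Type*} [NormedAddCommGroup F]

def solidCone (c t : ℝ) : Set (ℝ × F) := {p | p.1 ∈ Set.Ioc 0 c ∧ ‖p.2‖ < p.1 * t}

theorem measurableSet_solidCone [MeasurableSpace F] [OpensMeasurableSpace F] (c t : ℝ) :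
    MeasurableSet (solidCone (F := F) c t) :=
  (measurable_fst measurableSet_Ioc).inter
    (measurableSet_lt measurable_snd.norm (measurable_fst.mul_const t))

theorem measure_prod_solidCone [NormedSpace ℝ F] [MeasurableSpace F] [BorelSpace F]
    [FiniteDimensional ℝ F] (μ : Measure F) [μ.IsAddHaarMeasure] {c t : ℝ} (hc : 0 ≤ c)
    (ht : 0 < t) :
    (volume.prod μ) (solidCone c t) =
      ENNReal.ofReal (t ^ finrank ℝ F * c ^ (finrank ℝ F + 1) / (finrank ℝ F + 1)) *
        μ (ball 0 1) := by
  set k := finrank ℝ F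
  have hslice (a : ℝ) : μ (Prod.mk a ⁻¹' solidCone c t) =
      (Set.Ioc 0 c).indicator (fun a ↦ ENNReal.ofReal ((a * t) ^ k) * μ (ball 0 1)) a := by
    by_cases ha : a ∈ Set.Ioc 0 c
    · have : Prod.mk a ⁻¹' solidCone c t = ball (0 : F) (a * t) := by
        ext y; simp [solidCone, ha.1, ha.2]
      rw [Set.indicator_of_mem ha, this, μ.addHaar_ball_of_pos _ (mul_pos ha.1 ht)]
    · have : Prod.mk a ⁻¹' solidCone c t = (∅ : Set F) := by
        ext y; simp only [solidCone, Set.mem_preimage, Set.mem_ofPred_eq, ha, false_and,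
          Set.mem_empty_iff_false]
      rw [Set.indicator_of_notMem ha, this, measure_empty]
  have hint : ∫ a in Set.Ioc 0 c, (a * t) ^ k = t ^ k * c ^ (k + 1) / (k + 1) := by
    simp_rw [mul_pow, integral_mul_const, ← intervalIntegral.integral_of_le hc, integral_pow]
    ring
  rw [Measure.prod_apply (measurableSet_solidCone c t)]
  simp_rw [hslice]
  rw [lintegral_indicator measurableSet_Ioc, lintegral_mul_const _ (by fun_prop), ← hint,
    ofReal_integral_eq_lintegral_ofReal]
  · exact (by fun_prop : Continuous fun a : ℝ ↦ (a * t) ^ k).integrableOn_Ioc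
  · filter_upwards [ae_restrict_mem measurableSet_Ioc] with a ha
    exact pow_nonneg (mul_pos ha.1 ht).le k

end Cone

section Sector

variable {E : Type*} [NormedAddCommGroup E] [InnerProductSpace ℝ E]

def sphericalSector (P : E) (θ : ℝ) : Set E := {x | ‖x‖ ≤ 1 ∧ cos θ * ‖x‖ < ⟪x, P⟫}

theorem measurableSet_sphericalSector [MeasurableSpace E] [OpensMeasurableSpace E] (P : E)
    (θ : ℝ) : MeasurableSet (sphericalSector P θ) :=
  (measurableSet_le measurable_norm measurable_const).inter
    (measurableSet_lt (measurable_norm.const_mul _) (by fun_prop))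

theorem mem_sphericalSector_iff {P x : E} {θ : ℝ} (hP : ‖P‖ = 1) (hθ₀ : 0 ≤ θ)
    (hθπ : θ ≤ π) :
    x ∈ sphericalSector P θ ↔ ‖x‖ ≤ 1 ∧ x ≠ 0 ∧ angle x P < θ := by
  simp only [sphericalSector, Set.mem_ofPred_eq]
  by_cases hx : x = 0
  · simp [hx]
  have hnx : 0 < ‖x‖ := norm_pos_iff.mpr hx
  rw [← strictAntiOn_cos.lt_iff_gt ⟨hθ₀, hθπ⟩ ⟨angle_nonneg x P, angle_le_pi x P⟩,
    cos_angle, hP, mul_one, lt_div_iff₀ hnx]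
  simp [hx]

theorem volume_sphericalSector_eq [FiniteDimensional ℝ E] [MeasurableSpace E] [BorelSpace E]
    {P Q : E} (hP : ‖P‖ = 1) (hQ : ‖Q‖ = 1) (θ : ℝ) :
    volume (sphericalSector P θ) = volume (sphericalSector Q θ) := by
  let f : E ≃ₗᵢ[ℝ] E := Submodule.reflection (ℝ ∙ (P - Q))ᗮ
  have hfP : f P = Q := Submodule.reflection_sub (hP.trans hQ.symm)
  have : sphericalSector P θ = f ⁻¹' sphericalSector Q θ := by
    ext x
    simp only [sphericalSector, Set.mem_preimage, Set.mem_ofPred_eq, f.norm_map, ← hfP,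
      f.inner_map_map]
  rw [this, f.measurePreserving.measure_preimage
    (measurableSet_sphericalSector Q θ).nullMeasurableSet]

theorem pairwiseDisjoint_sphericalSector {S : Set E} {ω : ℝ} (hω : 0 ≤ ω) (hωπ : ω ≤ π)
    (hS : ∀ P ∈ S, ‖P‖ = 1) (hsep : S.Pairwise fun P Q ↦ ω ≤ angle P Q) :
    S.PairwiseDisjoint fun P ↦ sphericalSector P (ω / 2) := by
  intro P hP Q hQ hPQ
  refine Set.disjoint_left.mpr fun x hxP hxQ ↦ ?_
  rw [mem_sphericalSector_iff (hS P hP) (by linarith) (by linarith)] at hxP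
  rw [mem_sphericalSector_iff (hS Q hQ) (by linarith) (by linarith)] at hxQ
  have := angle_le_angle_add_angle P x Q
  rw [angle_comm P x] at this
  linarith [hsep hP hQ hPQ]

theorem closedBall_diff_zero_subset_biUnion_sphericalSector {S : Set E} {ω : ℝ} (hω : 0 ≤ ω)
    (hωπ : ω ≤ π) (hS : ∀ P ∈ S, ‖P‖ = 1)
    (hsat : ∀ Q, ‖Q‖ = 1 → ∃ P ∈ S, angle Q P < ω) :
    closedBall 0 1 \ {0} ⊆ ⋃ P ∈ S, sphericalSector P ω := by
  rintro x ⟨hx1, hx0⟩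
  rw [mem_closedBall_zero_iff] at hx1
  have hx : x ≠ 0 := hx0
  obtain ⟨P, hPS, hP⟩ := hsat (‖x‖⁻¹ • x) (norm_smul_inv_norm hx)
  rw [angle_smul_left_of_pos _ _ (inv_pos.mpr (norm_pos_iff.mpr hx))] at hP
  exact Set.mem_biUnion hPS ((mem_sphericalSector_iff (hS P hPS) hω hωπ).mpr ⟨hx1, hx, hP⟩)

theorem angle_eq_arccos_inner {P Q : E} (hP : ‖P‖ = 1) (hQ : ‖Q‖ = 1) :
    angle P Q = arccos ⟪P, Q⟫ := by
  simp [angle, hP, hQ]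

theorem sphericalSector_subset_closedBall (P : E) (θ : ℝ) :
    sphericalSector P θ ⊆ closedBall 0 1 :=
  fun _ hx ↦ mem_closedBall_zero_iff.mpr hx.1

end Sector

namespace EuclideanSpace

noncomputable def headTailEquiv (n : ℕ) :
    EuclideanSpace ℝ (Fin (n + 1)) ≃ᵐ ℝ × EuclideanSpace ℝ (Fin n) :=
  (MeasurableEquiv.toLp 2 (Fin (n + 1) → ℝ)).symm.trans
    ((MeasurableEquiv.piFinSuccAbove (fun _ ↦ ℝ) 0).trans
      ((MeasurableEquiv.refl ℝ).prodCongr (MeasurableEquiv.toLp 2 (Fin n → ℝ))))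

theorem measurePreserving_headTailEquiv (n : ℕ) :
    MeasurePreserving (headTailEquiv n) volume volume := by
  have hsnd : MeasurePreserving ((MeasurableEquiv.refl ℝ).prodCongr
      (MeasurableEquiv.toLp 2 (Fin n → ℝ))) volume volume := by
    rw [Measure.volume_eq_prod, Measure.volume_eq_prod ℝ]
    exact (MeasurePreserving.id volume).prod
      (volume_preserving_symm_measurableEquiv_toLp (Fin n)).symm
  exact hsnd.comp ((volume_preserving_piFinSuccAbove (fun _ ↦ ℝ) 0).comp
    (volume_preserving_symm_measurableEquiv_toLp (Fin (n + 1))))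

variable {n : ℕ}

@[simp]
theorem headTailEquiv_fst (x : EuclideanSpace ℝ (Fin (n + 1))) : (headTailEquiv n x).1 = x 0 :=
  rfl

theorem norm_sq_eq_sq_add_norm_headTailEquiv_snd_sq (x : EuclideanSpace ℝ (Fin (n + 1))) :
    ‖x‖ ^ 2 = x 0 ^ 2 + ‖(headTailEquiv n x).2‖ ^ 2 := by
  simp only [EuclideanSpace.norm_sq_eq, Fin.sum_univ_succ, Real.norm_eq_abs, sq_abs]
  rfl

theorem cos_mul_norm_lt_iff {θ : ℝ} (hθ₀ : 0 ≤ θ) (hθ : θ < π / 2)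
    {x : EuclideanSpace ℝ (Fin (n + 1))} (hx : 0 < x 0) :
    cos θ * ‖x‖ < x 0 ↔ ‖(headTailEquiv n x).2‖ < x 0 * tan θ := by
  have hcos : 0 < cos θ := cos_pos_of_mem_Ioo ⟨by linarith, hθ⟩
  have htan : 0 ≤ tan θ := tan_nonneg_of_nonneg_of_le_pi_div_two hθ₀ hθ.le
  rw [← pow_lt_pow_iff_left₀ (by positivity) hx.le two_ne_zero,
    ← pow_lt_pow_iff_left₀ (norm_nonneg _) (by positivity) two_ne_zero, mul_pow, mul_pow,
    norm_sq_eq_sq_add_norm_headTailEquiv_snd_sq, tan_eq_sin_div_cos, div_pow, sin_sq,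
    mul_div_assoc', lt_div_iff₀ (by positivity)]
  constructor <;> intro h <;> linarith

theorem volume_preimage_headTailEquiv_solidCone {c t : ℝ} (hc : 0 ≤ c) (ht : 0 < t) :
    volume (headTailEquiv n ⁻¹' solidCone c t) =
      ENNReal.ofReal (t ^ n * c ^ (n + 1) / (n + 1)) *
        volume (ball (0 : EuclideanSpace ℝ (Fin n)) 1) := by
  rw [(measurePreserving_headTailEquiv n).measure_preimage
    (measurableSet_solidCone c t).nullMeasurableSet, Measure.volume_eq_prod ℝ,
    measure_prod_solidCone _ hc ht, finrank_euclideanSpace_fin]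

theorem sphericalSector_single_subset {θ : ℝ} (hθ₀ : 0 ≤ θ) (hθ : θ < π / 2) :
    sphericalSector (single 0 1 : EuclideanSpace ℝ (Fin (n + 1))) θ ⊆
      headTailEquiv n ⁻¹' solidCone 1 (tan θ) := by
  rintro x ⟨hx1, hx⟩
  simp only [inner_single_right, one_mul, conj_trivial] at hx
  have hx0 : 0 < x 0 :=
    lt_of_le_of_lt (mul_nonneg (cos_nonneg_of_mem_Icc ⟨by linarith, hθ.le⟩) (norm_nonneg x)) hx
  refine ⟨⟨hx0, ?_⟩, (cos_mul_norm_lt_iff hθ₀ hθ hx0).mp hx⟩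
  calc x 0 ≤ ‖x‖ := (le_abs_self _).trans (PiLp.norm_apply_le x 0)
    _ ≤ 1 := hx1

theorem preimage_solidCone_subset_sphericalSector_single {θ : ℝ} (hθ₀ : 0 ≤ θ)
    (hθ : θ < π / 2) :
    headTailEquiv n ⁻¹' solidCone (cos θ) (tan θ) ⊆
      sphericalSector (single 0 1 : EuclideanSpace ℝ (Fin (n + 1))) θ := by
  rintro x ⟨⟨hx0, hxc⟩, hx⟩
  rw [headTailEquiv_fst] at hx0 hxc hx
  have hlt := (cos_mul_norm_lt_iff hθ₀ hθ hx0).mpr hx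
  refine ⟨?_, by simpa [inner_single_right] using hlt⟩
  have hcos : 0 < cos θ := cos_pos_of_mem_Ioo ⟨by linarith, hθ⟩
  nlinarith

theorem volume_sphericalSector_le {P : EuclideanSpace ℝ (Fin (n + 1))} (hP : ‖P‖ = 1)
    {θ : ℝ} (hθ₀ : 0 < θ) (hθ : θ < π / 2) :
    volume (sphericalSector P θ) ≤
      ENNReal.ofReal (tan θ ^ n / (n + 1)) * volume (ball (0 : EuclideanSpace ℝ (Fin n)) 1) := by
  rw [volume_sphericalSector_eq hP (Q := single 0 1) (by simp)]
  calc _ ≤ volume (headTailEquiv n ⁻¹' solidCone 1 (tan θ)) :=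
        measure_mono (sphericalSector_single_subset hθ₀.le hθ)
    _ = _ := by
        rw [volume_preimage_headTailEquiv_solidCone zero_le_one
          (tan_pos_of_pos_of_lt_pi_div_two hθ₀ hθ), one_pow, mul_one]

theorem le_volume_sphericalSector {P : EuclideanSpace ℝ (Fin (n + 1))} (hP : ‖P‖ = 1)
    {θ : ℝ} (hθ₀ : 0 < θ) (hθ : θ < π / 2) :
    ENNReal.ofReal (sin θ ^ n * cos θ / (n + 1)) *
        volume (ball (0 : EuclideanSpace ℝ (Fin n)) 1) ≤
      volume (sphericalSector P θ) := by
  rw [volume_sphericalSector_eq hP (Q := single 0 1) (by simp)]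
  have hcos : 0 < cos θ := cos_pos_of_mem_Ioo ⟨by linarith, hθ⟩
  calc _ = volume (headTailEquiv n ⁻¹' solidCone (cos θ) (tan θ)) := by
        rw [volume_preimage_headTailEquiv_solidCone hcos.le
          (tan_pos_of_pos_of_lt_pi_div_two hθ₀ hθ), tan_eq_sin_div_cos, div_pow, pow_succ]
        congr 2
        field_simp
    _ ≤ _ := measure_mono (preimage_solidCone_subset_sphericalSector_single hθ₀.le hθ)

end EuclideanSpace

open EuclideanSpace

section Counting

theorem unitBallVolume_pos (n : ℕ) : 0 < unitBallVolume n :=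
  ENNReal.toReal_pos (measure_ball_pos _ _ one_pos).ne' measure_ball_lt_top.ne

variable {n : ℕ} {S : Finset (EuclideanSpace ℝ (Fin (n + 1)))} {ω : ℝ}

theorem succ_mul_unitBallVolume_le_card_mul (hω₀ : 0 < ω) (hω : ω < π / 2)
    (hS : ∀ P ∈ S, ‖P‖ = 1) (hsat : ∀ Q, ‖Q‖ = 1 → ∃ P ∈ S, angle Q P < ω) :
    (n + 1) * unitBallVolume (n + 1) ≤ S.card * tan ω ^ n * unitBallVolume n := by
  have hcover : volume (ball (0 : EuclideanSpace ℝ (Fin (n + 1))) 1) ≤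
      S.card * (ENNReal.ofReal (tan ω ^ n / (n + 1)) *
        volume (ball (0 : EuclideanSpace ℝ (Fin n)) 1)) :=
    calc volume (ball (0 : EuclideanSpace ℝ (Fin (n + 1))) 1)
        = volume (closedBall (0 : EuclideanSpace ℝ (Fin (n + 1))) 1 \ {0}) := by
          rw [measure_sdiff_null (measure_singleton 0), Measure.addHaar_closedBall_eq_addHaar_ball]
      _ ≤ volume (⋃ P ∈ S, sphericalSector P ω) :=
          measure_mono (closedBall_diff_zero_subset_biUnion_sphericalSector hω₀.le
            (by linarith [pi_pos]) hS hsat)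
      _ ≤ ∑ P ∈ S, volume (sphericalSector P ω) := measure_biUnion_finset_le S _
      _ ≤ ∑ _P ∈ S, ENNReal.ofReal (tan ω ^ n / (n + 1)) *
            volume (ball (0 : EuclideanSpace ℝ (Fin n)) 1) :=
          Finset.sum_le_sum fun P hP ↦ volume_sphericalSector_le (hS P hP) hω₀ hω
      _ = _ := by rw [Finset.sum_const, nsmul_eq_mul]
  have := ENNReal.toReal_mono (by finiteness) hcover
  rw [ENNReal.toReal_mul, ENNReal.toReal_mul, ENNReal.toReal_natCast, ENNReal.toReal_ofReal
    (by have := tan_pos_of_pos_of_lt_pi_div_two hω₀ hω; positivity)] at this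
  calc (n + 1) * unitBallVolume (n + 1)
      ≤ (n + 1) * (S.card * (tan ω ^ n / (n + 1) * unitBallVolume n)) := by
        gcongr; exact this
    _ = S.card * tan ω ^ n * unitBallVolume n := by field_simp

theorem card_mul_le_succ_mul_unitBallVolume (hω₀ : 0 < ω) (hω : ω < π)
    (hS : ∀ P ∈ S, ‖P‖ = 1)
    (hsep : (S : Set (EuclideanSpace ℝ (Fin (n + 1)))).Pairwise fun P Q ↦ ω ≤ angle P Q) :
    S.card * (sin (ω / 2) ^ n * cos (ω / 2)) * unitBallVolume n ≤
      (n + 1) * unitBallVolume (n + 1) := by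
  have hpack : S.card * (ENNReal.ofReal (sin (ω / 2) ^ n * cos (ω / 2) / (n + 1)) *
        volume (ball (0 : EuclideanSpace ℝ (Fin n)) 1)) ≤
      volume (ball (0 : EuclideanSpace ℝ (Fin (n + 1))) 1) :=
    calc _ = ∑ _P ∈ S, ENNReal.ofReal (sin (ω / 2) ^ n * cos (ω / 2) / (n + 1)) *
            volume (ball (0 : EuclideanSpace ℝ (Fin n)) 1) := by
          rw [Finset.sum_const, nsmul_eq_mul]
      _ ≤ ∑ P ∈ S, volume (sphericalSector P (ω / 2)) :=
          Finset.sum_le_sum fun P hP ↦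
            le_volume_sphericalSector (hS P hP) (by linarith) (by linarith)
      _ = volume (⋃ P ∈ S, sphericalSector P (ω / 2)) :=
          (measure_biUnion_finset (pairwiseDisjoint_sphericalSector hω₀.le hω.le hS hsep)
            fun P _ ↦ measurableSet_sphericalSector P _).symm
      _ ≤ volume (closedBall (0 : EuclideanSpace ℝ (Fin (n + 1))) 1) :=
          measure_mono (Set.iUnion₂_subset fun P _ ↦ sphericalSector_subset_closedBall P _)
      _ = _ := Measure.addHaar_closedBall_eq_addHaar_ball _ _ _
  have := ENNReal.toReal_mono (by finiteness) hpack
  have hsin : 0 < sin (ω / 2) := sin_pos_of_pos_of_lt_pi (by linarith) (by linarith)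
  have hcos : 0 < cos (ω / 2) := cos_pos_of_mem_Ioo ⟨by linarith, by linarith⟩
  rw [ENNReal.toReal_mul, ENNReal.toReal_mul, ENNReal.toReal_natCast,
    ENNReal.toReal_ofReal (by positivity)] at this
  calc S.card * (sin (ω / 2) ^ n * cos (ω / 2)) * unitBallVolume n
      = (n + 1) * (S.card * (sin (ω / 2) ^ n * cos (ω / 2) / (n + 1) * unitBallVolume n)) := by
        field_simp
    _ ≤ (n + 1) * unitBallVolume (n + 1) := by gcongr; exact this

theorem le_card_of_forall_exists_angle_lt {ε : ℝ} (hε : 0 < ε) (hω₀ : 0 < ω)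
    (hω : ω < π / 2) (hS : ∀ P ∈ S, ‖P‖ = 1)
    (hsat : ∀ Q, ‖Q‖ = 1 → ∃ P ∈ S, angle Q P < ω)
    (htan : tan ω ^ n ≤ (1 + ε) * ω ^ n) :
    1 / (1 + ε) * ((n + 1) * unitBallVolume (n + 1) / unitBallVolume n) * (ω ^ n)⁻¹ ≤
      S.card := by
  have hκ := unitBallVolume_pos n
  calc 1 / (1 + ε) * ((n + 1) * unitBallVolume (n + 1) / unitBallVolume n) * (ω ^ n)⁻¹
      ≤ 1 / (1 + ε) * (S.card * ((1 + ε) * ω ^ n) * unitBallVolume n / unitBallVolume n) *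
          (ω ^ n)⁻¹ := by
        gcongr _ * (?_ / _) * _
        exact (succ_mul_unitBallVolume_le_card_mul hω₀ hω hS hsat).trans (by gcongr)
    _ = S.card := by field_simp

theorem card_le_of_pairwise_le_angle {ε : ℝ} (hε : 0 < ε) (hω₀ : 0 < ω) (hω : ω < π)
    (hS : ∀ P ∈ S, ‖P‖ = 1)
    (hsep : (S : Set (EuclideanSpace ℝ (Fin (n + 1)))).Pairwise fun P Q ↦ ω ≤ angle P Q)
    (hsin : (ω / 2) ^ n ≤ (1 + ε) * (sin (ω / 2) ^ n * cos (ω / 2))) :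
    S.card ≤ (1 + ε) * 2 ^ n * ((n + 1) * unitBallVolume (n + 1) / unitBallVolume n) *
      (ω ^ n)⁻¹ := by
  have hκ := unitBallVolume_pos n
  have hpack :=
    calc S.card * (ω / 2) ^ n * unitBallVolume n
        ≤ S.card * ((1 + ε) * (sin (ω / 2) ^ n * cos (ω / 2))) * unitBallVolume n := by gcongr
      _ = (1 + ε) * (S.card * (sin (ω / 2) ^ n * cos (ω / 2)) * unitBallVolume n) := by ring
      _ ≤ (1 + ε) * ((n + 1) * unitBallVolume (n + 1)) := by
        gcongr (1 + ε) * ?_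
        exact card_mul_le_succ_mul_unitBallVolume hω₀ hω hS hsep
  calc (S.card : ℝ)
      = S.card * (ω / 2) ^ n * unitBallVolume n * 2 ^ n / (ω ^ n * unitBallVolume n) := by
        rw [div_pow]; field_simp
    _ ≤ (1 + ε) * ((n + 1) * unitBallVolume (n + 1)) * 2 ^ n / (ω ^ n * unitBallVolume n) := by
        gcongr
    _ = _ := by field_simp

end Counting

theorem exists_tan_pow_le_and_pow_le_sin_pow_mul_cos (n : ℕ) {ε : ℝ} (hε : 0 < ε) :
    ∃ δ > 0, ∀ θ, 0 < θ → θ < δ →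
      tan θ ^ n ≤ (1 + ε) * θ ^ n ∧ θ ^ n ≤ (1 + ε) * (sin θ ^ n * cos θ) := by
  have hcont₁ : ContinuousAt (fun θ ↦ (sinc θ / cos θ) ^ n) 0 :=
    ((continuous_sinc.continuousAt.div continuous_cos.continuousAt (by simp)).pow n)
  have hcont₂ : ContinuousAt (fun θ ↦ sinc θ ^ n * cos θ) 0 := by fun_prop
  have h₁ := hcont₁.eventually (eventually_lt_nhds (b := 1 + ε) (by simpa))
  have h₂ := hcont₂.eventually
    (eventually_gt_nhds (b := (1 + ε)⁻¹) (by simpa using inv_lt_one_of_one_lt₀ (by linarith)))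
  obtain ⟨δ, hδ, hδ'⟩ := Metric.eventually_nhds_iff.mp (h₁.and h₂)
  refine ⟨δ, hδ, fun θ hθ₀ hθ ↦ ?_⟩
  obtain ⟨hlt₁, hlt₂⟩ := hδ' (y := θ) (by simpa [abs_of_pos hθ₀] using hθ)
  rw [sinc_of_ne_zero hθ₀.ne'] at hlt₁ hlt₂
  have hpow : 0 < θ ^ n := by positivity
  constructor
  · calc tan θ ^ n = (sin θ / θ / cos θ) ^ n * θ ^ n := by
          rw [tan_eq_sin_div_cos, ← mul_pow]; congr 1; field_simp
      _ ≤ (1 + ε) * θ ^ n := by gcongr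
  · calc θ ^ n = (1 + ε) * ((1 + ε)⁻¹ * θ ^ n) := by field_simp
      _ ≤ (1 + ε) * ((sin θ / θ) ^ n * cos θ * θ ^ n) := by gcongr
      _ = (1 + ε) * (sin θ ^ n * cos θ) := by rw [div_pow]; field_simp

theorem two_pow_le_eight_rpow (n : ℕ) : (2 : ℝ) ^ n ≤ 8 ^ ((n : ℝ) / 2) := by
  rw [rpow_div_two_eq_sqrt _ (by norm_num), rpow_natCast]
  gcongr
  rw [le_sqrt zero_le_two (by norm_num)]
  norm_num

theorem saturated_set_card_bounds_general (d : ℕ) (hd : 3 ≤ d) (ε : ℝ) (hε0 : 0 < ε) :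
    ∃ ω₀ : ℝ, 0 < ω₀ ∧ ω₀ ≤ π / 2 ∧
      ∀ ω : ℝ, 0 < ω → ω < ω₀ →
        ∀ S : Finset (EuclideanSpace ℝ (Fin d)),
          (∀ P ∈ S, P ∈ sphere (0 : EuclideanSpace ℝ (Fin d)) 1) →
          -- pairwise spherical distances are at least `ω`
          (∀ P ∈ S, ∀ Q ∈ S, P ≠ Q → ω ≤ Real.arccos (inner ℝ P Q : ℝ)) →
          -- no further point can be added, i.e. the set is saturated
          (¬ ∃ Q ∈ sphere (0 : EuclideanSpace ℝ (Fin d)) 1,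
            ∀ P ∈ S, ω ≤ Real.arccos (inner ℝ Q P : ℝ)) →
          (1 / (1 + ε)) * ((d : ℝ) * unitBallVolume d / unitBallVolume (d - 1)) *
              ω ^ (-((d : ℤ) - 1)) ≤ (S.card : ℝ) ∧
            (S.card : ℝ) ≤ (1 + ε) * (8 : ℝ) ^ (((d : ℝ) - 1) / 2) *
              ((d : ℝ) * unitBallVolume d / unitBallVolume (d - 1)) *
              ω ^ (-((d : ℤ) - 1)) := by
  obtain ⟨n, rfl⟩ : ∃ n, d = n + 1 := ⟨d - 1, by omega⟩
  obtain ⟨δ, hδ, hsmall⟩ := exists_tan_pow_le_and_pow_le_sin_pow_mul_cos n hε0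
  refine ⟨min δ (π / 2), lt_min hδ pi_div_two_pos, min_le_right _ _,
    fun ω hω₀ hω S hS hsep hsat ↦ ?_⟩
  have hωπ : ω < π / 2 := hω.trans_le (min_le_right _ _)
  have hωδ : ω < δ := hω.trans_le (min_le_left _ _)
  have hnorm (P) (hP : P ∈ S) : ‖P‖ = 1 := mem_sphere_zero_iff_norm.mp (hS P hP)
  have hcover (Q) (hQ : ‖Q‖ = 1) : ∃ P ∈ S, angle Q P < ω := by
    by_contra! h
    exact hsat ⟨Q, mem_sphere_zero_iff_norm.mpr hQ, fun P hP ↦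
      angle_eq_arccos_inner hQ (hnorm P hP) ▸ h P hP⟩
  have hpack : (S : Set (EuclideanSpace ℝ (Fin (n + 1)))).Pairwise fun P Q ↦ ω ≤ angle P Q :=
    fun P hP Q hQ hPQ ↦ show ω ≤ angle P Q from
      angle_eq_arccos_inner (hnorm P hP) (hnorm Q hQ) ▸ hsep P hP Q hQ hPQ
  have hexp : ω ^ (-(((n + 1 : ℕ) : ℤ) - 1)) = (ω ^ n)⁻¹ := by simp
  have hexp' : (((n + 1 : ℕ) : ℝ) - 1) / 2 = (n : ℝ) / 2 := by push_cast; ring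
  rw [hexp, hexp', Nat.add_sub_cancel]
  push_cast
  refine ⟨le_card_of_forall_exists_angle_lt hε0 hω₀ hωπ hnorm hcover
    (hsmall ω hω₀ hωδ).1,
    (card_le_of_pairwise_le_angle hε0 hω₀ (by linarith) hnorm hpack
      (hsmall (ω / 2) (by linarith) (by linarith)).2).trans ?_⟩
  have := unitBallVolume_pos n
  have := unitBallVolume_pos (n + 1)
  gcongr
  exact two_pow_le_eight_rpow n

/-- Lemma 2. For `0 < ε < 1` there is `0 < ω₀ ≤ π/2` such that for any
`0 < ω < ω₀`, any saturated point set on `S^{d-1}` for `ω` has cardinality `m` with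
`(1/(1+ε)) (dκ_d/κ_{d-1}) ω^{-(d-1)} ≤ m ≤ (1+ε) 8^{(d-1)/2} (dκ_d/κ_{d-1}) ω^{-(d-1)}`. -/
theorem saturated_set_card_bounds (d : ℕ) (hd : 3 ≤ d) (ε : ℝ) (hε0 : 0 < ε) (hε1 : ε < 1) :
    ∃ ω₀ : ℝ, 0 < ω₀ ∧ ω₀ ≤ π / 2 ∧
      ∀ ω : ℝ, 0 < ω → ω < ω₀ →
        ∀ S : Finset (EuclideanSpace ℝ (Fin d)),
          (∀ P ∈ S, P ∈ sphere (0 : EuclideanSpace ℝ (Fin d)) 1) →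
          -- pairwise spherical distances are at least `ω`
          (∀ P ∈ S, ∀ Q ∈ S, P ≠ Q → ω ≤ Real.arccos (inner ℝ P Q : ℝ)) →
          -- no further point can be added, i.e. the set is saturated
          (¬ ∃ Q ∈ sphere (0 : EuclideanSpace ℝ (Fin d)) 1,
            ∀ P ∈ S, ω ≤ Real.arccos (inner ℝ Q P : ℝ)) →
          (1 / (1 + ε)) * ((d : ℝ) * unitBallVolume d / unitBallVolume (d - 1)) *
              ω ^ (-((d : ℤ) - 1)) ≤ (S.card : ℝ) ∧
            (S.card : ℝ) ≤ (1 + ε) * (8 : ℝ) ^ (((d : ℝ) - 1) / 2) *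
              ((d : ℝ) * unitBallVolume d / unitBallVolume (d - 1)) *
              ω ^ (-((d : ℤ) - 1)) :=
  saturated_set_card_bounds_general d hd ε hε0
end

section
/- Let n ≥ 1 be an integer and let v_1, …, v_n be unit vectors in ℝ³ in general position, meaning that every subset of {v_1, …, v_n} of cardinality at most 3 is linearly independent (so the corresponding great circles are pairwise distinct and no three of them pass through a common point). Then the complement in S² of the union of the n great circles, S² \ ⋃_{i=1}^n {x ∈ S² : ⟨x, v_i⟩ = 0}, has exactly n² − n + 2 connected components. -/
/-!
The complement of the great circles `⟪x, vᵢ⟫ = 0` is the trace on `S²` of the union of the open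
cells of the central arrangement, one for each sign vector `s`: the points `x` where `⟪x, vᵢ⟫` has
sign `sᵢ` for every `i`. The sign vector is locally constant on the complement, and each cell is an
open convex cone, which radial projection maps onto a connected subset of the sphere; so the
components correspond to the sign vectors of nonempty cells.

These are counted by deletion–restriction inside a subspace `K`: adding a hyperplane `H ⊉ K` cuts
in two exactly those cells that meet `H`, and the traces `cell ∩ H` are the cells of the
arrangement restricted to `K ∩ H` (intermediate value theorem on the convex cell in one direction,
perturbation off `H` in the other). In general position this gives
`r(d, m + 1) = r(d, m) + r(d - 1, m)` for `d = dim K`, whence `r(3, n) = n² - n + 2`.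
-/

open Metric Module Set
open scoped RealInnerProductSpace

namespace HyperplaneArrangement

variable {E : Type*} [NormedAddCommGroup E] [InnerProductSpace ℝ E] {ι : Type*}

def cell (g : ι → E) (s : ι → Bool) : Set E :=
  {x | ∀ i, 0 < ⟪x, bif s i then g i else -g i⟫}

noncomputable def signVec (g : ι → E) (x : E) : ι → Bool :=
  fun i => decide (0 < ⟪x, g i⟫)

def regions (K : Submodule ℝ E) (g : ι → E) : Set (ι → Bool) :=
  {s | ∃ x ∈ K, x ∈ cell g s}

section Cell

variable {g : ι → E} {s : ι → Bool} {x : E}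

lemma zero_lt_inner_cond_iff {v : E} {b : Bool} :
    0 < ⟪x, bif b then v else -v⟫ ↔ ⟪x, v⟫ ≠ 0 ∧ decide (0 < ⟪x, v⟫) = b := by
  cases b <;> simp only [cond_false, cond_true, inner_neg_right, Left.neg_pos_iff,
    decide_eq_false_iff_not, decide_eq_true_eq, not_lt]
  · exact ⟨fun h => ⟨h.ne, h.le⟩, fun h => lt_of_le_of_ne h.2 h.1⟩
  · exact ⟨fun h => ⟨h.ne', h⟩, And.right⟩

lemma mem_cell_iff : x ∈ cell g s ↔ (∀ i, ⟪x, g i⟫ ≠ 0) ∧ signVec g x = s := by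
  simp only [cell, mem_ofPred_eq, zero_lt_inner_cond_iff, forall_and, funext_iff, signVec]

lemma isOpen_cell [Finite ι] (g : ι → E) (s : ι → Bool) : IsOpen (cell g s) := by
  simp only [cell, ofPred_forall]
  exact isOpen_iInter_of_finite fun i => isOpen_lt continuous_const (by fun_prop)

lemma convex_cell (g : ι → E) (s : ι → Bool) : Convex ℝ (cell g s) := by
  simp only [cell, ofPred_forall]
  exact convex_iInter fun i => convex_halfSpace_gt ((innerₛₗ ℝ).flip _).isLinear 0

lemma smul_mem_cell {c : ℝ} (hc : 0 < c) (hx : x ∈ cell g s) : c • x ∈ cell g s := fun i => by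
  rw [real_inner_smul_left]
  exact mul_pos hc (hx i)

lemma zero_notMem_cell [Nonempty ι] (g : ι → E) (s : ι → Bool) : (0 : E) ∉ cell g s :=
  fun h => by simpa using h (Classical.arbitrary ι)

end Cell

section Sphere

def greatCircleComplement (g : ι → E) : Set E :=
  sphere (0 : E) 1 \ ⋃ i, {x | ⟪x, g i⟫ = 0}

variable {g : ι → E} {s : ι → Bool} {x : E}

lemma mem_greatCircleComplement :
    x ∈ greatCircleComplement g ↔ ‖x‖ = 1 ∧ ∀ i, ⟪x, g i⟫ ≠ 0 := by
  simp [greatCircleComplement]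

lemma sphere_inter_cell_eq_image [Nonempty ι] (g : ι → E) (s : ι → Bool) :
    sphere (0 : E) 1 ∩ cell g s = (fun x => ‖x‖⁻¹ • x) '' cell g s := by
  ext x
  constructor
  · rintro ⟨hx₁, hx⟩
    refine ⟨x, hx, ?_⟩
    simp [mem_sphere_zero_iff_norm.1 hx₁]
  · rintro ⟨y, hy, rfl⟩
    have hy₀ : y ≠ 0 := fun h => zero_notMem_cell g s (h ▸ hy)
    exact ⟨by simpa using norm_smul_inv_norm (𝕜 := ℝ) hy₀,
      smul_mem_cell (inv_pos.2 (norm_pos_iff.2 hy₀)) hy⟩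

lemma isPreconnected_sphere_inter_cell [Nonempty ι] (g : ι → E) (s : ι → Bool) :
    IsPreconnected (sphere (0 : E) 1 ∩ cell g s) := by
  rw [sphere_inter_cell_eq_image]
  refine (convex_cell g s).isPreconnected.image _ (ContinuousOn.smul ?_ continuousOn_id)
  exact continuous_norm.continuousOn.inv₀ fun y hy => norm_ne_zero_iff.2 fun h =>
    zero_notMem_cell g s (h ▸ hy)

lemma signVec_eq_iff_mem_cell (hx : x ∈ greatCircleComplement g) :
    signVec g x = s ↔ x ∈ cell g s := by
  rw [mem_cell_iff, and_iff_right (mem_greatCircleComplement.1 hx).2]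

lemma continuous_signVec_greatCircleComplement [Finite ι] :
    Continuous fun x : greatCircleComplement g => signVec g x := by
  refine continuous_discrete_rng.2 fun s => ?_
  convert (isOpen_cell g s).preimage continuous_subtype_val using 1
  ext x
  exact signVec_eq_iff_mem_cell x.2

lemma mem_connectedComponent_of_signVec_eq [Nonempty ι] {x y : greatCircleComplement g}
    (h : signVec g x = signVec g y) : y ∈ connectedComponent x := by
  set S : Set (greatCircleComplement g) := {z | (z : E) ∈ cell g (signVec g x)}
  have hS : Subtype.val '' S = sphere (0 : E) 1 ∩ cell g (signVec g x) := by
    ext z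
    constructor
    · rintro ⟨z, hz, rfl⟩
      exact ⟨z.2.1, hz⟩
    · rintro ⟨hz₁, hz⟩
      exact ⟨⟨z, mem_greatCircleComplement.2 ⟨mem_sphere_zero_iff_norm.1 hz₁,
        (mem_cell_iff.1 hz).1⟩⟩, hz, rfl⟩
  have hSconn : IsPreconnected S := by
    rw [← Topology.IsInducing.subtypeVal.isPreconnected_image, hS]
    exact isPreconnected_sphere_inter_cell g _
  exact hSconn.subset_connectedComponent ((signVec_eq_iff_mem_cell x.2).1 rfl)
    ((signVec_eq_iff_mem_cell y.2).1 h.symm)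

lemma range_signVec_greatCircleComplement [Nonempty ι] :
    range (fun x : greatCircleComplement g => signVec g x) = regions ⊤ g := by
  ext s
  constructor
  · rintro ⟨x, rfl⟩
    exact ⟨x, Submodule.mem_top, (signVec_eq_iff_mem_cell x.2).1 rfl⟩
  · rintro ⟨x, -, hx⟩
    have hx' : ‖x‖⁻¹ • x ∈ sphere (0 : E) 1 ∩ cell g s :=
      sphere_inter_cell_eq_image g s ▸ mem_image_of_mem _ hx
    have hmem : ‖x‖⁻¹ • x ∈ greatCircleComplement g := mem_greatCircleComplement.2
      ⟨mem_sphere_zero_iff_norm.1 hx'.1, (mem_cell_iff.1 hx'.2).1⟩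
    exact ⟨⟨_, hmem⟩, (signVec_eq_iff_mem_cell hmem).2 hx'.2⟩

theorem card_connectedComponents_greatCircleComplement [Finite ι] [Nonempty ι] (g : ι → E) :
    Nat.card (ConnectedComponents (greatCircleComplement g)) = (regions ⊤ g).ncard := by
  have hf := continuous_signVec_greatCircleComplement (g := g)
  have hinj : Function.Injective hf.connectedComponentsLift := by
    refine ConnectedComponents.surjective_coe.forall₂.2 fun x y h => ?_
    rw [hf.connectedComponentsLift_apply_coe, hf.connectedComponentsLift_apply_coe] at h
    exact ConnectedComponents.coe_eq_coe'.2 (mem_connectedComponent_of_signVec_eq h.symm)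
  have hrange : range hf.connectedComponentsLift = regions ⊤ g := by
    rw [← ConnectedComponents.surjective_coe.range_comp, hf.connectedComponentsLift_comp_coe,
      range_signVec_greatCircleComplement]
  rw [← Nat.card_range_of_injective hinj, hrange, Nat.card_coe_set_eq]

end Sphere

section DeletionRestriction

lemma exists_add_smul_mem_inner_pos {U : Set E} (hU : IsOpen U) {x y w : E} (hxU : x ∈ U)
    (hx : 0 ≤ ⟪x, w⟫) (hy : ⟪y, w⟫ ≠ 0) : ∃ c : ℝ, x + c • y ∈ U ∧ 0 < ⟪x + c • y, w⟫ := by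
  have hlim : Filter.Tendsto (fun ε : ℝ => x + (ε * ⟪y, w⟫) • y)
      (nhdsWithin 0 (Ioi 0)) (nhds x) :=
    tendsto_nhdsWithin_of_tendsto_nhds (Continuous.tendsto' (by fun_prop) _ _ (by simp))
  obtain ⟨ε, hεU, hε⟩ := ((hlim.eventually (hU.mem_nhds hxU)).and self_mem_nhdsWithin).exists
  refine ⟨ε * ⟪y, w⟫, hεU, ?_⟩
  have : 0 < ε * ⟪y, w⟫ * ⟪y, w⟫ := by
    rw [mul_assoc]
    exact mul_pos hε (mul_self_pos.2 hy)
  rw [inner_add_left, real_inner_smul_left]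
  linarith

def halfRegions {m : ℕ} (K : Submodule ℝ E) (g : Fin m → E) (w : E) : Set (Fin m → Bool) :=
  {t | ∃ x ∈ K, x ∈ cell g t ∧ 0 < ⟪x, w⟫}

variable {K : Submodule ℝ E} {m : ℕ} {u : E} (g : Fin m → E)

lemma regions_cons : regions K (Fin.cons u g) =
    Fin.cons true '' halfRegions K g u ∪ Fin.cons false '' halfRegions K g (-u) := by
  ext s
  rw [← Fin.cons_self_tail s]
  cases s 0 <;> simp [regions, halfRegions, cell, Fin.forall_fin_succ, and_comm]

lemma halfRegions_union (hu : ∃ y ∈ K, ⟪y, u⟫ ≠ 0) :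
    halfRegions K g u ∪ halfRegions K g (-u) = regions K g := by
  obtain ⟨y, hyK, hy⟩ := hu
  refine Subset.antisymm (union_subset ?_ ?_) fun t ⟨x, hxK, hx⟩ => ?_
  · exact fun t ⟨x, hxK, hx, _⟩ => ⟨x, hxK, hx⟩
  · exact fun t ⟨x, hxK, hx, _⟩ => ⟨x, hxK, hx⟩
  rcases le_total 0 ⟪x, u⟫ with hxu | hxu
  · obtain ⟨c, hc, hpos⟩ := exists_add_smul_mem_inner_pos (isOpen_cell g t) hx hxu hy
    exact Or.inl ⟨_, K.add_mem hxK (K.smul_mem c hyK), hc, hpos⟩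
  · obtain ⟨c, hc, hpos⟩ := exists_add_smul_mem_inner_pos (w := -u) (isOpen_cell g t) hx
      (by rwa [inner_neg_right, neg_nonneg]) (by rwa [inner_neg_right, neg_ne_zero])
    exact Or.inr ⟨_, K.add_mem hxK (K.smul_mem c hyK), hc, hpos⟩

lemma halfRegions_inter (hu : ∃ y ∈ K, ⟪y, u⟫ ≠ 0) :
    halfRegions K g u ∩ halfRegions K g (-u) = regions (K ⊓ (ℝ ∙ u)ᗮ) g := by
  obtain ⟨y, hyK, hy⟩ := hu
  ext t
  constructor
  · rintro ⟨⟨x₁, hx₁K, hx₁, h₁⟩, ⟨x₂, hx₂K, hx₂, h₂⟩⟩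
    rw [inner_neg_right, neg_pos] at h₂
    have hconn : IsPreconnected ((K : Set E) ∩ cell g t) :=
      (K.convex.inter (convex_cell g t)).isPreconnected
    obtain ⟨z, ⟨hzK, hz⟩, hzu⟩ := hconn.intermediate_value ⟨hx₂K, hx₂⟩ ⟨hx₁K, hx₁⟩
      (f := fun z => ⟪z, u⟫) (by fun_prop) ⟨h₂.le, h₁.le⟩
    exact ⟨z, ⟨hzK, Submodule.mem_orthogonal_singleton_iff_inner_left.2 hzu⟩, hz⟩
  · rintro ⟨x, ⟨hxK, hxu⟩, hx⟩
    rw [SetLike.mem_coe, Submodule.mem_orthogonal_singleton_iff_inner_left] at hxu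
    obtain ⟨c₁, hc₁, h₁⟩ := exists_add_smul_mem_inner_pos (isOpen_cell g t) hx hxu.ge hy
    obtain ⟨c₂, hc₂, h₂⟩ := exists_add_smul_mem_inner_pos (w := -u) (isOpen_cell g t) hx
      (by rw [inner_neg_right, hxu, neg_zero]) (by rwa [inner_neg_right, neg_ne_zero])
    exact ⟨⟨_, K.add_mem hxK (K.smul_mem c₁ hyK), hc₁, h₁⟩,
      ⟨_, K.add_mem hxK (K.smul_mem c₂ hyK), hc₂, h₂⟩⟩

theorem ncard_regions_cons (hu : ∃ y ∈ K, ⟪y, u⟫ ≠ 0) :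
    (regions K (Fin.cons u g)).ncard =
      (regions K g).ncard + (regions (K ⊓ (ℝ ∙ u)ᗮ) g).ncard := by
  have hdisj : Disjoint (Fin.cons true '' halfRegions K g u)
      (Fin.cons false '' halfRegions K g (-u) : Set (Fin (m + 1) → Bool)) := by
    simp [disjoint_left, Fin.cons_inj]
  rw [regions_cons, ncard_union_eq hdisj,
    ncard_image_of_injective _ (Fin.cons_right_injective _),
    ncard_image_of_injective _ (Fin.cons_right_injective _), ← halfRegions_union g hu,
    ← halfRegions_inter g hu, ncard_union_add_ncard_inter]

end DeletionRestriction

section GeneralPosition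

def InGeneralPosition (K : Submodule ℝ E) (g : ι → E) : Prop :=
  ∀ S : Finset ι, S.card ≤ finrank ℝ K →
    finrank ℝ ↥(K ⊓ (Submodule.span ℝ (g '' S))ᗮ) + S.card = finrank ℝ K

variable {K : Submodule ℝ E}

lemma InGeneralPosition.comp {κ : Type*} {g : ι → E} (h : InGeneralPosition K g) {e : κ → ι}
    (he : Function.Injective e) : InGeneralPosition K (g ∘ e) := fun S hS => by
  have := h (S.map ⟨e, he⟩) (by rwa [Finset.card_map])
  rwa [Finset.card_map, Finset.coe_map, Function.Embedding.coeFn_mk, ← image_comp] at this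

variable {m : ℕ} {u : E} {g : Fin m → E}

lemma InGeneralPosition.finrank_inf_orthogonal_add_one (h : InGeneralPosition K (Fin.cons u g))
    (hK : 0 < finrank ℝ K) : finrank ℝ ↥(K ⊓ (ℝ ∙ u)ᗮ) + 1 = finrank ℝ K := by
  have := h {0} (by rwa [Finset.card_singleton])
  rwa [Finset.card_singleton, Finset.coe_singleton, image_singleton, Fin.cons_zero] at this

lemma InGeneralPosition.exists_inner_ne_zero (h : InGeneralPosition K (Fin.cons u g))
    (hK : 0 < finrank ℝ K) : ∃ y ∈ K, ⟪y, u⟫ ≠ 0 := by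
  by_contra! H
  have hKu : K ⊓ (ℝ ∙ u)ᗮ = K :=
    inf_eq_left.2 fun y hy => Submodule.mem_orthogonal_singleton_iff_inner_left.2 (H y hy)
  have := h.finrank_inf_orthogonal_add_one hK
  rw [hKu] at this
  omega

lemma InGeneralPosition.inf_orthogonal (h : InGeneralPosition K (Fin.cons u g))
    (hK : 0 < finrank ℝ K) : InGeneralPosition (K ⊓ (ℝ ∙ u)ᗮ) g := by
  intro S hS
  have hrank := h.finrank_inf_orthogonal_add_one hK
  have := h (Finset.cons 0 (S.map (Fin.succEmb m)) (by simp)) (by simp; omega)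
  rw [Finset.card_cons, Finset.card_map, Finset.coe_cons, Finset.coe_map, image_insert_eq,
    Fin.cons_zero, ← image_comp, Fin.coe_succEmb, Fin.cons_comp_succ, Submodule.span_insert,
    ← Submodule.inf_orthogonal, ← inf_assoc] at this
  omega

lemma inGeneralPosition_top [FiniteDimensional ℝ E] {g : ι → E}
    (h : ∀ S : Finset ι, S.card ≤ finrank ℝ E → LinearIndependent ℝ fun i : S => g i) :
    InGeneralPosition ⊤ g := by
  intro S hS
  rw [finrank_top] at hS ⊢
  have hspan : finrank ℝ (Submodule.span ℝ (g '' S)) = S.card := by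
    rw [image_eq_range]
    exact (finrank_span_eq_card (h S hS)).trans (Fintype.card_coe S)
  rw [top_inf_eq, ← hspan, add_comm, Submodule.finrank_add_finrank_orthogonal]

end GeneralPosition

def regionCount : ℕ → ℕ → ℕ
  | _, 0 => 1
  | 0, _ + 1 => 0
  | d + 1, m + 1 => regionCount (d + 1) m + regionCount d m

lemma regionCount_one_succ (m : ℕ) : regionCount 1 (m + 1) = 2 := by
  induction m with
  | zero => rfl
  | succ m ih => rw [regionCount, ih]; rfl

lemma regionCount_two_succ (m : ℕ) : regionCount 2 (m + 1) = 2 * (m + 1) := by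
  induction m with
  | zero => rfl
  | succ m ih => rw [regionCount, ih, regionCount_one_succ]; ring

lemma regionCount_three_succ (m : ℕ) : regionCount 3 (m + 1) = m ^ 2 + m + 2 := by
  induction m with
  | zero => rfl
  | succ m ih => rw [regionCount, ih, regionCount_two_succ]; ring

theorem ncard_regions_of_inGeneralPosition [FiniteDimensional ℝ E] {m : ℕ}
    {K : Submodule ℝ E} {g : Fin m → E} (h : InGeneralPosition K g) :
    (regions K g).ncard = regionCount (finrank ℝ K) m := by
  induction m generalizing K with
  | zero =>
    have : regions K g = univ := eq_univ_of_forall fun s => ⟨0, K.zero_mem, finZeroElim⟩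
    simp [this, regionCount]
  | succ m ih =>
    obtain ⟨u, g, rfl⟩ : ∃ u g', g = Fin.cons u g' := ⟨_, _, (Fin.cons_self_tail g).symm⟩
    rcases Nat.eq_zero_or_pos (finrank ℝ K) with hK | hK
    · have : regions K (Fin.cons u g) = ∅ := by
        refine eq_empty_of_forall_notMem fun s ⟨x, hxK, hx⟩ => ?_
        rw [Submodule.finrank_eq_zero.1 hK, Submodule.mem_bot] at hxK
        exact zero_notMem_cell _ s (hxK ▸ hx)
      simp [this, hK, regionCount]
    · obtain ⟨d, hd⟩ := Nat.exists_eq_succ_of_ne_zero hK.ne'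
      have htail : InGeneralPosition K g := by
        simpa only [Fin.cons_comp_succ] using h.comp (Fin.succ_injective m)
      have hrank := h.finrank_inf_orthogonal_add_one hK
      rw [ncard_regions_cons _ (h.exists_inner_ne_zero hK), ih htail, ih (h.inf_orthogonal hK),
        hd, show finrank ℝ ↥(K ⊓ (ℝ ∙ u)ᗮ) = d by omega]
      rfl

end HyperplaneArrangement

open HyperplaneArrangement in
theorem great_circles_general_position_regions_general (n : ℕ) (hn : 1 ≤ n)
    (v : Fin n → EuclideanSpace ℝ (Fin 3))
    (hgen : ∀ s : Finset (Fin n), s.card ≤ 3 →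
      LinearIndependent ℝ (fun i : s => v i)) :
    Nat.card (ConnectedComponents
      ↥(sphere (0 : EuclideanSpace ℝ (Fin 3)) 1 \
        ⋃ i, {x : EuclideanSpace ℝ (Fin 3) | (inner ℝ x (v i) : ℝ) = 0})) =
      n ^ 2 - n + 2 := by
  obtain ⟨m, rfl⟩ := Nat.exists_eq_add_of_le' hn
  have hv : InGeneralPosition ⊤ v :=
    inGeneralPosition_top fun S hS => hgen S (by simpa using hS)
  refine (card_connectedComponents_greatCircleComplement v).trans ?_
  rw [ncard_regions_of_inGeneralPosition hv, finrank_top, finrank_euclideanSpace_fin,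
    regionCount_three_succ]
  have : (m + 1) ^ 2 = m ^ 2 + m + (m + 1) := by ring
  omega

/-- `n` great circles in general position on `S²` divide the sphere into
exactly `n² - n + 2` regions: the complement of their union has `n² - n + 2` connected
components. -/
theorem great_circles_general_position_regions (n : ℕ) (hn : 1 ≤ n)
    (v : Fin n → EuclideanSpace ℝ (Fin 3)) (hv : ∀ i, ‖v i‖ = 1)
    (hgen : ∀ s : Finset (Fin n), s.card ≤ 3 →
      LinearIndependent ℝ (fun i : s => v i)) :
    Nat.card (ConnectedComponents
      ↥(sphere (0 : EuclideanSpace ℝ (Fin 3)) 1 \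
        ⋃ i, {x : EuclideanSpace ℝ (Fin 3) | (inner ℝ x (v i) : ℝ) = 0})) =
      n ^ 2 - n + 2 :=
  great_circles_general_position_regions_general n hn v hgen
end

section
/- For each n ∈ {4, 5} there exist a real number h with 0 < h < π/2 and unit vectors v_1, …, v_n ∈ ℝ³ such that the n congruent zones Z(v_1,h), …, Z(v_n,h) cover S², i.e. S² = ⋃_{i=1}^n Z(v_i,h), and no point of S² belongs to more than 3 of these zones. -/
open Metric Real

/-!
The poles are rational points built from the Pythagorean triples (8, 15, 17) and (5, 12, 13), so
for `x = (a, b, c)` on the sphere every `⟪x, vᵢ⟫` is an explicit linear form in `a, b, c`, and both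
claims become elementary inequalities between these forms on `a² + b² + c² = 1`. For `n = 4`,
`sin h = 1/2`: a point outside the zones about `e₁` and `e₃` has `|a|, |c| > 1/2`, hence `b² < 1/2`,
and then `|15|b| - 8|a|| ≤ 17/2` puts it into the zone about `(∓8, 15, 0)/17`; a point in all four
zones has `8|a| + 15|b| ≤ 17/2` and `|a|, |c| ≤ 1/2`, which forces `a² + b² + c² < 1`. The case
`n = 5`, `sin h = 11/25`, with the two extra poles `(±5, 0, 12)/13`, is of the same kind.
-/

theorem Set.eq_iUnion_sep_of_forall_exists {α ι : Type*} {S : Set α} {p : ι → α → Prop}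
    (h : ∀ x ∈ S, ∃ i, p i x) : S = ⋃ i, {x ∈ S | p i x} := by
  ext x
  simp only [Set.mem_iUnion, Set.mem_sep_iff]
  exact ⟨fun hx => (h x hx).imp fun _ hi => ⟨hx, hi⟩, fun ⟨_, hx, _⟩ => hx⟩

theorem Set.ncard_setOf_le_card_sub_card {ι : Type*} [Fintype ι] {p : ι → Prop} {t : Finset ι}
    (ht : ∀ i ∈ t, ¬ p i) : {i | p i}.ncard ≤ Fintype.card ι - t.card := by
  have hsub : {i | p i} ⊆ (t : Set ι)ᶜ := fun i hi hit => ht i hit hi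
  calc {i | p i}.ncard ≤ (t : Set ι)ᶜ.ncard := Set.ncard_le_ncard hsub
    _ = Fintype.card ι - t.card := by
      rw [Set.ncard_compl, Set.ncard_coe_finset, Nat.card_eq_fintype_card]

theorem Set.ncard_setOf_le_card_sub_one {ι : Type*} [Fintype ι] {p : ι → Prop}
    (h : ∃ i, ¬ p i) : {i | p i}.ncard ≤ Fintype.card ι - 1 := by
  obtain ⟨i, hi⟩ := h
  simpa using Set.ncard_setOf_le_card_sub_card (t := {i}) (by simpa using hi)

theorem Set.ncard_setOf_le_card_sub_two {ι : Type*} [Fintype ι] [Nonempty ι] {p : ι → Prop}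
    (h : ∀ j, ∃ i ≠ j, ¬ p i) : {i | p i}.ncard ≤ Fintype.card ι - 2 := by
  classical
  obtain ⟨i, -, hi⟩ := h (Classical.arbitrary ι)
  obtain ⟨k, hki, hk⟩ := h i
  have hpair : ∀ l ∈ ({k, i} : Finset ι), ¬ p l := by simp [hi, hk]
  simpa [Finset.card_pair hki] using Set.ncard_setOf_le_card_sub_card hpair

theorem EuclideanSpace.mem_sphere_zero_one_iff_fin_three {x : EuclideanSpace ℝ (Fin 3)} :
    x ∈ sphere 0 1 ↔ x 0 ^ 2 + x 1 ^ 2 + x 2 ^ 2 = 1 := by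
  simp [EuclideanSpace.sphere_zero_eq 1 zero_le_one, Fin.sum_univ_three]

theorem EuclideanSpace.inner_toLp_fin_three (x : EuclideanSpace ℝ (Fin 3)) (p q r : ℝ) :
    inner ℝ x !₂[p, q, r] = x 0 * p + x 1 * q + x 2 * r := by
  simp [PiLp.inner_apply, Fin.sum_univ_three, mul_comm]

noncomputable def fourPoles : Fin 4 → EuclideanSpace ℝ (Fin 3) :=
  ![!₂[1, 0, 0], !₂[8 / 17, 15 / 17, 0], !₂[-8 / 17, 15 / 17, 0], !₂[0, 0, 1]]

theorem norm_fourPoles (i : Fin 4) : ‖fourPoles i‖ = 1 := by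
  rw [← mem_sphere_zero_iff_norm, EuclideanSpace.mem_sphere_zero_one_iff_fin_three]
  fin_cases i <;> norm_num [fourPoles, Matrix.cons_val_two, Matrix.vecHead, Matrix.vecTail]

theorem exists_abs_inner_fourPoles_le {x : EuclideanSpace ℝ (Fin 3)} (hx : x ∈ sphere 0 1) :
    ∃ i, |inner ℝ x (fourPoles i)| ≤ 1 / 2 := by
  rw [EuclideanSpace.mem_sphere_zero_one_iff_fin_three] at hx
  by_contra! h
  simp only [Fin.forall_fin_succ, IsEmpty.forall_iff, and_true, fourPoles, Matrix.cons_val_zero,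
    Matrix.cons_val_succ, EuclideanSpace.inner_toLp_fin_three, lt_abs] at h
  obtain ⟨h0 | h0, h1 | h1, h2 | h2, h3 | h3⟩ := h <;> nlinarith

theorem exists_lt_abs_inner_fourPoles {x : EuclideanSpace ℝ (Fin 3)} (hx : x ∈ sphere 0 1) :
    ∃ i, 1 / 2 < |inner ℝ x (fourPoles i)| := by
  rw [EuclideanSpace.mem_sphere_zero_one_iff_fin_three] at hx
  by_contra! h
  simp only [Fin.forall_fin_succ, IsEmpty.forall_iff, and_true, fourPoles, Matrix.cons_val_zero,
    Matrix.cons_val_succ, EuclideanSpace.inner_toLp_fin_three, abs_le] at h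
  obtain ⟨⟨_, _⟩, ⟨_, _⟩, ⟨_, _⟩, _, _⟩ := h
  nlinarith

noncomputable def fivePoles : Fin 5 → EuclideanSpace ℝ (Fin 3) :=
  ![!₂[1, 0, 0], !₂[8 / 17, 15 / 17, 0], !₂[-8 / 17, 15 / 17, 0],
    !₂[5 / 13, 0, 12 / 13], !₂[-5 / 13, 0, 12 / 13]]

theorem norm_fivePoles (i : Fin 5) : ‖fivePoles i‖ = 1 := by
  rw [← mem_sphere_zero_iff_norm, EuclideanSpace.mem_sphere_zero_one_iff_fin_three]
  fin_cases i <;> norm_num [fivePoles, Matrix.cons_val_two, Matrix.vecHead, Matrix.vecTail]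

theorem exists_abs_inner_fivePoles_le {x : EuclideanSpace ℝ (Fin 3)} (hx : x ∈ sphere 0 1) :
    ∃ i, |inner ℝ x (fivePoles i)| ≤ 11 / 25 := by
  rw [EuclideanSpace.mem_sphere_zero_one_iff_fin_three] at hx
  by_contra! h
  simp only [Fin.forall_fin_succ, IsEmpty.forall_iff, and_true, fivePoles, Matrix.cons_val_zero,
    Matrix.cons_val_succ, EuclideanSpace.inner_toLp_fin_three, lt_abs] at h
  obtain ⟨h0 | h0, h1 | h1, h2 | h2, h3 | h3, h4 | h4⟩ := h <;> nlinarith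

theorem exists_ne_lt_abs_inner_fivePoles {x : EuclideanSpace ℝ (Fin 3)} (hx : x ∈ sphere 0 1)
    (j : Fin 5) : ∃ i ≠ j, 11 / 25 < |inner ℝ x (fivePoles i)| := by
  rw [EuclideanSpace.mem_sphere_zero_one_iff_fin_three] at hx
  by_contra! h
  simp only [Fin.forall_fin_succ, IsEmpty.forall_iff, and_true, fivePoles, Matrix.cons_val_zero,
    Matrix.cons_val_succ, EuclideanSpace.inner_toLp_fin_three, abs_le] at h
  fin_cases j <;>
    simp +decide only [false_implies, true_implies, true_and, and_true] at h <;>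
    obtain ⟨⟨_, _⟩, ⟨_, _⟩, ⟨_, _⟩, _, _⟩ := h <;> nlinarith

/-- For `n = 4` and `n = 5` one can cover `S²` with `n` congruent zones
such that no point of `S²` belongs to more than `3` of the zones. -/
theorem cover_S2_four_or_five_zones_multiplicity_three :
    ∀ n ∈ ({4, 5} : Set ℕ),
      ∃ h : ℝ, 0 < h ∧ h < π / 2 ∧
        ∃ v : Fin n → EuclideanSpace ℝ (Fin 3), (∀ i, ‖v i‖ = 1) ∧
          (sphere (0 : EuclideanSpace ℝ (Fin 3)) 1 =
            ⋃ i, {x ∈ sphere (0 : EuclideanSpace ℝ (Fin 3)) 1 |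
              |(inner ℝ x (v i) : ℝ)| ≤ Real.sin h}) ∧
          ∀ x ∈ sphere (0 : EuclideanSpace ℝ (Fin 3)) 1,
            {i : Fin n | |(inner ℝ x (v i) : ℝ)| ≤ Real.sin h}.ncard ≤ 3 := by
  intro n hn
  obtain rfl | rfl : n = 4 ∨ n = 5 := by simpa using hn
  · refine ⟨π / 6, by positivity, by linarith [pi_pos], fourPoles, norm_fourPoles, ?_, ?_⟩ <;>
      rw [sin_pi_div_six]
    · exact Set.eq_iUnion_sep_of_forall_exists fun x hx => exists_abs_inner_fourPoles_le hx
    · intro x hx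
      obtain ⟨i, hi⟩ := exists_lt_abs_inner_fourPoles hx
      exact Set.ncard_setOf_le_card_sub_one ⟨i, hi.not_ge⟩
  · have hsin : sin (arcsin (11 / 25)) = 11 / 25 := sin_arcsin (by norm_num) (by norm_num)
    refine ⟨arcsin (11 / 25), arcsin_pos.2 (by norm_num), arcsin_lt_pi_div_two.2 (by norm_num),
      fivePoles, norm_fivePoles, ?_, ?_⟩ <;> rw [hsin]
    · exact Set.eq_iUnion_sep_of_forall_exists fun x hx => exists_abs_inner_fivePoles_le hx
    · intro x hx
      exact Set.ncard_setOf_le_card_sub_two fun j =>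
        (exists_ne_lt_abs_inner_fivePoles hx j).imp fun _ ⟨hij, hi⟩ => ⟨hij, hi.not_ge⟩
end

section
/- Let n ≥ 3 be an integer, let h be a real number with 0 < h < π/2, and let v_1, …, v_n be unit vectors in ℝ³. Suppose that the n congruent zones Z(v_1,h), …, Z(v_n,h) cover S², i.e. S² = ⋃_{i=1}^n Z(v_i,h). Then there exists a point of S² that belongs to at least 3 of these zones. -/
/-
Fix a zone `Z_a` and its boundary circle `C = {x ∈ S² | ⟪x, v_a⟫ = sin h}`. Every point of `C`
is a limit of points outside `Z_a`, so by closedness it lies in some other zone. If a point of `C`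
lies in two other zones, it lies in three. Otherwise the other zones meet the connected circle `C`
in pairwise disjoint closed sets, so a single zone `Z_j` contains all of `C`. Comparing angles, this
forces `Z_a ∪ Z_j = S²` (or `Z_j = Z_a` when `v_j = ±v_a`). The equator of a third zone `Z_k` is
connected and meets both `Z_a` and `Z_j`, hence meets `Z_a ∩ Z_j`: a point in three zones.
-/

open Metric Real Module
open scoped InnerProductSpace

theorem IsPreconnected.exists_subset_or_exists_mem_inter {X ι : Type*} [TopologicalSpace X]
    [Finite ι] {T : Set X} (hT : IsPreconnected T) (hTne : T.Nonempty) {F : ι → Set X}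
    (hF : ∀ i, IsClosed (F i)) (hTF : T ⊆ ⋃ i, F i) :
    (∃ i, T ⊆ F i) ∨ ∃ x ∈ T, ∃ i j, i ≠ j ∧ x ∈ F i ∧ x ∈ F j := by
  obtain ⟨x₀, hx₀⟩ := hTne
  obtain ⟨i, hx₀i⟩ := Set.mem_iUnion.1 (hTF hx₀)
  set G := ⋃ (j) (_ : j ≠ i), F j
  have hG : IsClosed G := isClosed_iUnion_of_finite fun j => isClosed_iUnion_of_finite fun _ => hF j
  have hTFG : T ⊆ F i ∪ G := fun x hx => by
    obtain ⟨j, hxj⟩ := Set.mem_iUnion.1 (hTF hx)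
    by_cases hji : j = i
    · exact .inl (hji ▸ hxj)
    · exact .inr (Set.mem_biUnion hji hxj)
  by_cases hdisj : T ∩ (F i ∩ G) = ∅
  · have hsub := isPreconnected_iff_subset_of_disjoint_closed.1 hT _ _ (hF i) hG hTFG hdisj
    exact .inl ⟨i, hsub.resolve_right fun hTG =>
      Set.eq_empty_iff_forall_notMem.1 hdisj x₀ ⟨hx₀, hx₀i, hTG hx₀⟩⟩
  · obtain ⟨x, hxT, hxi, hxG⟩ := Set.nonempty_iff_ne_empty.2 hdisj
    obtain ⟨j, hji, hxj⟩ := Set.mem_iUnion₂.1 hxG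
    exact .inr ⟨x, hxT, i, j, Ne.symm hji, hxi, hxj⟩

theorem mul_add_sqrt_mul_sqrt_le_of_le {s c t : ℝ} (hs : -1 ≤ s) (hc0 : 0 ≤ c) (hc1 : c < 1)
    (hsc : s * c + √(1 - s ^ 2) * √(1 - c ^ 2) ≤ s) (hst : s ≤ t) (ht : t ≤ 1) :
    t * c + √(1 - t ^ 2) * √(1 - c ^ 2) ≤ s := by
  have cos_sub_arccos (x : ℝ) (hx : -1 ≤ x) (hx' : x ≤ 1) :
      cos (arccos c - arccos x) = x * c + √(1 - x ^ 2) * √(1 - c ^ 2) := by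
    rw [cos_sub, cos_arccos hx hx', cos_arccos (by linarith) hc1.le, sin_arccos, sin_arccos]
    ring
  rw [← cos_sub_arccos s hs (hst.trans ht)] at hsc
  rw [← cos_sub_arccos t (hs.trans hst) ht]
  -- With `s = cos ε`, `c = cos α`, `t = cos τ`: from `cos (α - ε) ≤ cos ε` get `2ε ≤ α`, so that
  -- `ε ≤ α - τ ≤ π / 2`.
  have hcos : cos (arccos s) = s := cos_arccos hs (hst.trans ht)
  have hτε : arccos t ≤ arccos s := arccos_le_arccos hst
  have hα0 : 0 < arccos c := arccos_pos.2 hc1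
  have hα : arccos c ≤ π / 2 := arccos_le_pi_div_two.2 hc0
  have h2ε : 2 * arccos s ≤ arccos c := by
    by_contra! hlt
    have := cos_lt_cos_of_nonneg_of_le_pi (abs_nonneg (arccos c - arccos s)) (arccos_le_pi s)
      (abs_sub_lt_iff.2 ⟨by linarith, by linarith⟩)
    rw [cos_abs, hcos] at this
    linarith
  calc cos (arccos c - arccos t)
      ≤ cos (arccos s) :=
        cos_le_cos_of_nonneg_of_le_pi (arccos_nonneg s) (by linarith [arccos_nonneg t])
          (by linarith)
    _ = s := hcos

section

variable {E : Type*} [NormedAddCommGroup E] [InnerProductSpace ℝ E]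

/-- The zone `Z(v, h)` of the statement is `sphere 0 1 ∩ slab v (sin h)`. -/
def slab (v : E) (s : ℝ) : Set E := {x | |⟪x, v⟫_ℝ| ≤ s}

def latitude (v : E) (t : ℝ) : Set E := {x ∈ sphere (0 : E) 1 | ⟪x, v⟫_ℝ = t}

theorem isClosed_slab (v : E) (s : ℝ) : IsClosed (slab v s) :=
  isClosed_le (continuous_id.inner continuous_const).abs continuous_const

theorem latitude_subset_slab {v : E} {t s : ℝ} (hts : |t| ≤ s) : latitude v t ⊆ slab v s := by
  rintro x ⟨-, rfl⟩
  exact hts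

theorem abs_inner_le_one {x v : E} (hx : ‖x‖ = 1) (hv : ‖v‖ = 1) : |⟪x, v⟫_ℝ| ≤ 1 := by
  simpa [hx, hv] using abs_real_inner_le_norm x v

theorem norm_sub_inner_smul {x v : E} (hx : ‖x‖ = 1) (hv : ‖v‖ = 1) :
    ‖x - ⟪x, v⟫_ℝ • v‖ = √(1 - ⟪x, v⟫_ℝ ^ 2) := by
  rw [← sqrt_sq (norm_nonneg _), norm_sub_sq_real, norm_smul, real_inner_smul_right, hx, hv,
    Real.norm_eq_abs, mul_one, sq_abs]
  ring_nf

/-- In cosines: the spherical distance from `x` to `z` is at least the difference of their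
distances to `v`. -/
theorem abs_inner_le_mul_add_sqrt_mul_sqrt {x v z : E} (hx : ‖x‖ = 1) (hv : ‖v‖ = 1)
    (hz : ‖z‖ = 1) :
    |⟪x, z⟫_ℝ| ≤ |⟪x, v⟫_ℝ| * |⟪z, v⟫_ℝ| + √(1 - ⟪x, v⟫_ℝ ^ 2) * √(1 - ⟪z, v⟫_ℝ ^ 2) := by
  have hdecomp : ⟪x, z⟫_ℝ = ⟪x, v⟫_ℝ * ⟪z, v⟫_ℝ + ⟪x - ⟪x, v⟫_ℝ • v, z - ⟪z, v⟫_ℝ • v⟫_ℝ := by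
    simp only [inner_sub_left, inner_sub_right, real_inner_smul_left, real_inner_smul_right,
      real_inner_self_eq_norm_sq, hv, real_inner_comm z v]
    ring
  calc |⟪x, z⟫_ℝ|
      ≤ |⟪x, v⟫_ℝ * ⟪z, v⟫_ℝ| + |⟪x - ⟪x, v⟫_ℝ • v, z - ⟪z, v⟫_ℝ • v⟫_ℝ| := by
        rw [hdecomp]; exact abs_add_le _ _
    _ ≤ _ := by
      rw [abs_mul, ← norm_sub_inner_smul hx hv, ← norm_sub_inner_smul hz hv]
      gcongr
      exact abs_real_inner_le_norm _ _

theorem abs_inner_le_abs_inner_of_abs_inner_eq_one {x v z : E} (hx : ‖x‖ = 1) (hv : ‖v‖ = 1)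
    (hz : ‖z‖ = 1) (hvz : |⟪z, v⟫_ℝ| = 1) : |⟪x, z⟫_ℝ| ≤ |⟪x, v⟫_ℝ| := by
  have := abs_inner_le_mul_add_sqrt_mul_sqrt hx hv hz
  rwa [← sq_abs ⟪z, v⟫_ℝ, hvz, one_pow, sub_self, sqrt_zero, mul_zero, add_zero, mul_one] at this

theorem exists_norm_eq_one_inner_eq_zero [FiniteDimensional ℝ E] (hE : 3 ≤ finrank ℝ E)
    (a b : E) : ∃ x : E, ‖x‖ = 1 ∧ ⟪x, a⟫_ℝ = 0 ∧ ⟪x, b⟫_ℝ = 0 := by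
  classical
  set K := Submodule.span ℝ ((({a, b} : Finset E)) : Set E)
  have hK : finrank ℝ K ≤ 2 := (finrank_span_finset_le_card {a, b}).trans Finset.card_le_two
  have hKperp : Kᗮ ≠ ⊥ := by
    rw [Ne, Submodule.orthogonal_eq_bot_iff]
    intro hKtop
    rw [hKtop, finrank_top] at hK
    omega
  obtain ⟨y, hy, hy0⟩ := Submodule.exists_mem_ne_zero_of_ne_bot hKperp
  have horth (u : E) (hu : u = a ∨ u = b) : ⟪‖y‖⁻¹ • y, u⟫_ℝ = 0 := by
    rw [real_inner_smul_left, real_inner_comm,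
      Submodule.inner_right_of_mem_orthogonal (Submodule.subset_span (by simpa using hu)) hy,
      mul_zero]
  exact ⟨‖y‖⁻¹ • y, norm_smul_inv_norm hy0, horth a (.inl rfl), horth b (.inr rfl)⟩

theorem smul_add_sqrt_smul_mem_latitude {v w : E} (hv : ‖v‖ = 1) (hw : ‖w‖ = 1)
    (hwv : ⟪w, v⟫_ℝ = 0) {t : ℝ} (ht : |t| ≤ 1) : t • v + √(1 - t ^ 2) • w ∈ latitude v t := by
  have ht2 : 0 ≤ 1 - t ^ 2 := by nlinarith [abs_le.1 ht]
  refine ⟨?_, ?_⟩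
  · have horth : ⟪t • v, √(1 - t ^ 2) • w⟫_ℝ = 0 := by
      rw [real_inner_smul_left, real_inner_smul_right, real_inner_comm, hwv, mul_zero, mul_zero]
    have hsq := norm_add_sq_eq_norm_sq_add_norm_sq_real horth
    rw [norm_smul, norm_smul, hv, hw, Real.norm_eq_abs, Real.norm_eq_abs,
      abs_of_nonneg (sqrt_nonneg _), mul_one, mul_one, abs_mul_abs_self, mul_self_sqrt ht2,
      show t * t + (1 - t ^ 2) = 1 by ring] at hsq
    rw [mem_sphere_zero_iff_norm]
    exact (mul_self_eq_one_iff.1 hsq).resolve_right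
      (by linarith [norm_nonneg (t • v + √(1 - t ^ 2) • w)])
  · rw [inner_add_left, real_inner_smul_left, real_inner_smul_left, hwv,
      real_inner_self_eq_norm_sq, hv]
    ring

theorem exists_eq_smul_add_sqrt_smul_of_mem_latitude {v x : E} (hv : ‖v‖ = 1) {t : ℝ}
    (ht : |t| < 1) (hx : x ∈ latitude v t) :
    ∃ w ∈ (ℝ ∙ v)ᗮ, ‖w‖ = 1 ∧ x = t • v + √(1 - t ^ 2) • w := by
  obtain ⟨hx1, rfl⟩ := hx
  rw [mem_sphere_zero_iff_norm] at hx1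
  have hr : 0 < √(1 - ⟪x, v⟫_ℝ ^ 2) := sqrt_pos.2 (by nlinarith [abs_lt.1 ht])
  refine ⟨(√(1 - ⟪x, v⟫_ℝ ^ 2))⁻¹ • (x - ⟪x, v⟫_ℝ • v), ?_, ?_, ?_⟩
  · rw [Submodule.mem_orthogonal_singleton_iff_inner_right, real_inner_smul_right,
      inner_sub_right, real_inner_smul_right, real_inner_self_eq_norm_sq, hv, real_inner_comm]
    ring
  · rw [norm_smul, norm_sub_inner_smul hx1 hv, Real.norm_eq_abs, abs_inv,
      abs_of_pos hr, inv_mul_cancel₀ hr.ne']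
  · rw [smul_inv_smul₀ hr.ne', add_sub_cancel]

theorem isConnected_latitude [FiniteDimensional ℝ E] (hE : 3 ≤ finrank ℝ E) {v : E}
    (hv : ‖v‖ = 1) {t : ℝ} (ht : |t| < 1) : IsConnected (latitude v t) := by
  have hrank : 1 < Module.rank ℝ (ℝ ∙ v)ᗮ := by
    have := (ℝ ∙ v).finrank_add_finrank_orthogonal
    rw [finrank_span_singleton (norm_ne_zero_iff.1 (hv.symm ▸ one_ne_zero))] at this
    rw [← finrank_eq_rank]
    exact_mod_cast (by omega : 1 < finrank ℝ (ℝ ∙ v)ᗮ)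
  have himage : latitude v t =
      (fun w : (ℝ ∙ v)ᗮ => t • v + √(1 - t ^ 2) • (w : E)) '' sphere 0 1 := by
    ext x
    constructor
    · intro hx
      obtain ⟨w, hw, hw1, rfl⟩ := exists_eq_smul_add_sqrt_smul_of_mem_latitude hv ht hx
      exact ⟨⟨w, hw⟩, mem_sphere_zero_iff_norm.2 hw1, rfl⟩
    · rintro ⟨w, hw1, rfl⟩
      refine smul_add_sqrt_smul_mem_latitude hv (mem_sphere_zero_iff_norm.1 hw1) ?_ ht.le
      rw [real_inner_comm]
      exact Submodule.mem_orthogonal_singleton_iff_inner_right.1 w.2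
  rw [himage]
  exact (isConnected_sphere hrank 0 zero_le_one).image _ (by fun_prop)

theorem latitude_subset_closure {v : E} (hv : ‖v‖ = 1) {t : ℝ} (ht : |t| < 1) :
    latitude v t ⊆ closure {x ∈ sphere (0 : E) 1 | t < ⟪x, v⟫_ℝ} := by
  intro x hx
  obtain ⟨w, hw, hw1, rfl⟩ := exists_eq_smul_add_sqrt_smul_of_mem_latitude hv ht hx
  have hwv : ⟪w, v⟫_ℝ = 0 := by
    rw [real_inner_comm]; exact Submodule.mem_orthogonal_singleton_iff_inner_right.1 hw
  have hcont : Continuous fun r : ℝ => r • v + √(1 - r ^ 2) • w := by fun_prop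
  refine mem_closure_of_tendsto (b := nhdsWithin t (Set.Ioi t))
    ((hcont.tendsto t).mono_left nhdsWithin_le_nhds) ?_
  filter_upwards [Ioo_mem_nhdsGT (abs_lt.1 ht).2] with r hr
  obtain ⟨hr1, hr2⟩ := smul_add_sqrt_smul_mem_latitude hv hw1 hwv
    (abs_le.2 ⟨by linarith [(abs_lt.1 ht).1, hr.1], hr.2.le⟩)
  exact ⟨hr1, by rw [hr2]; exact hr.1⟩

theorem exists_mem_latitude_le_abs_inner {v z : E} (hv : ‖v‖ = 1) (hz : ‖z‖ = 1)
    (hzv : |⟪z, v⟫_ℝ| < 1) {t : ℝ} (ht0 : 0 ≤ t) (ht1 : t ≤ 1) :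
    ∃ x ∈ latitude v t, t * |⟪z, v⟫_ℝ| + √(1 - t ^ 2) * √(1 - ⟪z, v⟫_ℝ ^ 2) ≤ |⟪x, z⟫_ℝ| := by
  set c := ⟪z, v⟫_ℝ with hc
  have hc2 : c ^ 2 < 1 := (sq_lt_one_iff_abs_lt_one c).2 hzv
  have hb : 0 < √(1 - c ^ 2) := sqrt_pos.2 (sub_pos.2 hc2)
  obtain ⟨σ, hσ, hσc⟩ : ∃ σ : ℝ, |σ| = 1 ∧ σ * c = |c| := by
    rcases le_total 0 c with hc | hc
    · exact ⟨1, abs_one, by rw [one_mul, abs_of_nonneg hc]⟩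
    · exact ⟨-1, by simp, by rw [neg_one_mul, abs_of_nonpos hc]⟩
  have hσσ : σ * σ = 1 := by rw [← abs_mul_abs_self, hσ, one_mul]
  set w := (σ / √(1 - c ^ 2)) • (z - c • v)
  have hw : ‖w‖ = 1 := by
    rw [norm_smul, norm_sub_inner_smul hz hv, Real.norm_eq_abs, abs_div, hσ, abs_of_pos hb,
      one_div_mul_cancel hb.ne']
  have hwv : ⟪w, v⟫_ℝ = 0 := by
    rw [real_inner_smul_left, inner_sub_left, real_inner_smul_left, real_inner_self_eq_norm_sq,
      hv]
    ring
  refine ⟨_, smul_add_sqrt_smul_mem_latitude hv hw hwv (abs_le.2 ⟨by linarith, ht1⟩), ?_⟩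
  have hxz : ⟪t • v + √(1 - t ^ 2) • w, z⟫_ℝ = t * c + √(1 - t ^ 2) * (σ * √(1 - c ^ 2)) := by
    rw [inner_add_left, real_inner_smul_left, real_inner_smul_left, real_inner_smul_left,
      inner_sub_left, real_inner_smul_left, real_inner_self_eq_norm_sq, hz, real_inner_comm z v,
      ← hc]
    field_simp
    linear_combination (-(√(1 - t ^ 2) * σ)) * mul_self_sqrt (sub_nonneg.2 hc2.le)
  calc t * |c| + √(1 - t ^ 2) * √(1 - c ^ 2)
      = σ * ⟪t • v + √(1 - t ^ 2) • w, z⟫_ℝ := by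
        rw [hxz]
        linear_combination (-t) * hσc - (√(1 - t ^ 2) * √(1 - c ^ 2)) * hσσ
    _ ≤ |σ * ⟪t • v + √(1 - t ^ 2) • w, z⟫_ℝ| := le_abs_self _
    _ = |⟪t • v + √(1 - t ^ 2) • w, z⟫_ℝ| := by rw [abs_mul, hσ, one_mul]

theorem sphere_subset_slab_union_of_latitude_subset {v z : E} (hv : ‖v‖ = 1) (hz : ‖z‖ = 1)
    (hzv : |⟪z, v⟫_ℝ| < 1) {s : ℝ} (hs0 : 0 ≤ s) (hs1 : s ≤ 1)
    (hsub : latitude v s ⊆ slab z s) : sphere (0 : E) 1 ⊆ slab v s ∪ slab z s := by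
  intro x hx
  rw [mem_sphere_zero_iff_norm] at hx
  by_cases hxv : |⟪x, v⟫_ℝ| ≤ s
  · exact .inl hxv
  right
  obtain ⟨p, hp, hpz⟩ := exists_mem_latitude_le_abs_inner hv hz hzv hs0 hs1
  have hsc := hpz.trans (hsub hp)
  rw [← sq_abs ⟪z, v⟫_ℝ] at hsc
  calc |⟪x, z⟫_ℝ|
      ≤ |⟪x, v⟫_ℝ| * |⟪z, v⟫_ℝ| + √(1 - |⟪x, v⟫_ℝ| ^ 2) * √(1 - |⟪z, v⟫_ℝ| ^ 2) := by
        simpa only [sq_abs] using abs_inner_le_mul_add_sqrt_mul_sqrt hx hv hz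
    _ ≤ s := mul_add_sqrt_mul_sqrt_le_of_le (by linarith) (abs_nonneg _) hzv hsc
        (not_le.1 hxv).le (abs_inner_le_one hx hv)

theorem latitude_subset_iUnion_slab_ne {ι : Type*} [Finite ι] {v : ι → E} {a : ι}
    (ha : ‖v a‖ = 1) {s : ℝ} (hs0 : 0 ≤ s) (hs1 : s < 1)
    (hcover : sphere (0 : E) 1 ⊆ ⋃ i, slab (v i) s) :
    latitude (v a) s ⊆ ⋃ i : {i // i ≠ a}, slab (v i) s := by
  refine (latitude_subset_closure ha (abs_lt.2 ⟨by linarith, hs1⟩)).trans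
    (closure_minimal ?_ (isClosed_iUnion_of_finite fun i => isClosed_slab _ _))
  rintro x ⟨hx, hxa⟩
  obtain ⟨i, hi⟩ := Set.mem_iUnion.1 (hcover hx)
  have hia : i ≠ a := by
    rintro rfl
    exact absurd hi (not_le.2 (hxa.trans_le (le_abs_self _)))
  exact Set.mem_iUnion.2 ⟨⟨i, hia⟩, hi⟩

theorem exists_mem_slab_inter_of_sphere_subset_union [FiniteDimensional ℝ E]
    (hE : 3 ≤ finrank ℝ E) {u v w : E} (hw : ‖w‖ = 1) {s : ℝ} (hs : 0 ≤ s)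
    (hcover : sphere (0 : E) 1 ⊆ slab u s ∪ slab v s) :
    ∃ x ∈ sphere (0 : E) 1, x ∈ slab u s ∧ x ∈ slab v s ∧ x ∈ slab w s := by
  have hequator : latitude w 0 ⊆ slab w s := latitude_subset_slab (by simpa using hs)
  have meets (y : E) : (latitude w 0 ∩ slab y s).Nonempty := by
    obtain ⟨x, hx1, hxw, hxy⟩ := exists_norm_eq_one_inner_eq_zero hE w y
    exact ⟨x, ⟨mem_sphere_zero_iff_norm.2 hx1, hxw⟩, latitude_subset_slab (by simpa using hs)
      ⟨mem_sphere_zero_iff_norm.2 hx1, hxy⟩⟩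
  obtain ⟨x, hxL, hxu, hxv⟩ := isPreconnected_closed_iff.1
    (isConnected_latitude hE hw (by simp)).isPreconnected _ _ (isClosed_slab u s)
    (isClosed_slab v s) (fun x hx => hcover hx.1) (meets u) (meets v)
  exact ⟨x, hxL.1, hxu, hxv, hequator hxL⟩

theorem exists_mem_slab_inter_of_abs_inner_eq_one [FiniteDimensional ℝ E]
    (hE : 3 ≤ finrank ℝ E) {v z : E} (hv : ‖v‖ = 1) (hz : ‖z‖ = 1) (hzv : |⟪z, v⟫_ℝ| = 1)
    (w : E) {s : ℝ} (hs : 0 ≤ s) :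
    ∃ x ∈ sphere (0 : E) 1, x ∈ slab v s ∧ x ∈ slab z s ∧ x ∈ slab w s := by
  obtain ⟨x, hx1, hxv, hxw⟩ := exists_norm_eq_one_inner_eq_zero hE v w
  have hxv' : x ∈ slab v s := by simp [slab, hxv, hs]
  exact ⟨x, mem_sphere_zero_iff_norm.2 hx1, hxv',
    (abs_inner_le_abs_inner_of_abs_inner_eq_one hx1 hv hz hzv).trans hxv',
    by simp [slab, hxw, hs]⟩

theorem exists_mem_three_slabs [FiniteDimensional ℝ E] (hE : 3 ≤ finrank ℝ E) {ι : Type*}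
    [Finite ι] (hι : 3 ≤ ENat.card ι) {v : ι → E} (hv : ∀ i, ‖v i‖ = 1) {s : ℝ} (hs0 : 0 ≤ s)
    (hs1 : s < 1) (hcover : sphere (0 : E) 1 ⊆ ⋃ i, slab (v i) s) :
    ∃ x ∈ sphere (0 : E) 1, ∃ i j k, i ≠ j ∧ i ≠ k ∧ j ≠ k ∧
      x ∈ slab (v i) s ∧ x ∈ slab (v j) s ∧ x ∈ slab (v k) s := by
  obtain ⟨a⟩ : Nonempty ι := (ENat.card_pos_iff_nonempty ι).1 (lt_of_lt_of_le (by norm_num) hι)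
  have hbdry := isConnected_latitude hE (hv a) (abs_lt.2 ⟨by linarith, hs1⟩)
  rcases hbdry.isPreconnected.exists_subset_or_exists_mem_inter hbdry.nonempty
      (fun i => isClosed_slab _ _) (latitude_subset_iUnion_slab_ne (hv a) hs0 hs1 hcover) with
    ⟨⟨j, hja⟩, hj⟩ | ⟨x, hx, i, j, hij, hxi, hxj⟩
  · obtain ⟨k, hka, hkj⟩ := ENat.exists_ne_ne_of_three_le hι a j
    obtain ⟨x, hx, hxa, hxj, hxk⟩ : ∃ x ∈ sphere (0 : E) 1,
        x ∈ slab (v a) s ∧ x ∈ slab (v j) s ∧ x ∈ slab (v k) s := by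
      rcases (abs_inner_le_one (hv j) (hv a)).lt_or_eq with hnonpar | hpar
      · exact exists_mem_slab_inter_of_sphere_subset_union hE (hv k) hs0
          (sphere_subset_slab_union_of_latitude_subset (hv a) (hv j) hnonpar hs0 hs1.le hj)
      · exact exists_mem_slab_inter_of_abs_inner_eq_one hE (hv a) (hv j) hpar (v k) hs0
    exact ⟨x, hx, a, j, k, Ne.symm hja, Ne.symm hka, Ne.symm hkj, hxa, hxj, hxk⟩
  · exact ⟨x, hx.1, a, i, j, Ne.symm i.2, Ne.symm j.2, Subtype.coe_ne_coe.2 hij,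
      latitude_subset_slab (abs_of_nonneg hs0).le hx, hxi, hxj⟩

end

/-- If `n ≥ 3` congruent zones of half-width `h` cover `S²`, then some
point of `S²` belongs to at least `3` of the zones. -/
theorem cover_S2_multiplicity_at_least_three (n : ℕ) (hn : 3 ≤ n)
    (h : ℝ) (hh0 : 0 < h) (hhπ : h < π / 2)
    (v : Fin n → EuclideanSpace ℝ (Fin 3)) (hv : ∀ i, ‖v i‖ = 1)
    (hcover : sphere (0 : EuclideanSpace ℝ (Fin 3)) 1 =
      ⋃ i, {x ∈ sphere (0 : EuclideanSpace ℝ (Fin 3)) 1 |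
        |(inner ℝ x (v i) : ℝ)| ≤ Real.sin h}) :
    ∃ p ∈ sphere (0 : EuclideanSpace ℝ (Fin 3)) 1,
      3 ≤ {i : Fin n | |(inner ℝ p (v i) : ℝ)| ≤ Real.sin h}.ncard := by
  have hs0 : 0 ≤ sin h := sin_nonneg_of_nonneg_of_le_pi hh0.le (by linarith [pi_pos])
  have hs1 : sin h < 1 := by
    simpa using sin_lt_sin_of_lt_of_le_pi_div_two (by linarith [pi_pos]) le_rfl hhπ
  have hslabs : sphere (0 : EuclideanSpace ℝ (Fin 3)) 1 ⊆ ⋃ i, slab (v i) (sin h) := by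
    intro x hx
    obtain ⟨i, -, hi⟩ := Set.mem_iUnion.1 (hcover.le hx)
    exact Set.mem_iUnion.2 ⟨i, hi⟩
  obtain ⟨p, hp, i, j, k, hij, hik, hjk, hi, hj, hk⟩ :=
    exists_mem_three_slabs (by simp) (by simpa using hn) hv hs0 hs1 hslabs
  exact ⟨p, hp, (Set.two_lt_ncard_iff).2 ⟨i, j, k, hi, hj, hk, hij, hik, hjk⟩⟩
end
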